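/- arXiv:1908.11360 — 2 statements merged into one kernel-verified Lean document; each statement's English description precedes it below -/
import Mathlib

section
/- Weakening is height-preserving admissible in G3Ldm_n^m: if the labelled sequent R, Γ has a G3Ldm_n^m-derivation of height h, then for any multiset of relational atoms R' and any multiset of labelled formulas Γ', the sequent R, R', Γ', Γ has a G3Ldm_n^m-derivation of height at most h. -/
namespace Stit

/-- Formulas of the language `L^m` (negation normal form), with agents `Fin m`
and propositional variables indexed by `ℕ`. -/
inductive Fml (m : ℕ) : Type
  | pos : ℕ → Fml m                  -- p
  | neg : ℕ → Fml m                  -- p̄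
  | and : Fml m → Fml m → Fml m      -- φ ∧ ψ
  | or  : Fml m → Fml m → Fml m      -- φ ∨ ψ
  | box : Fml m → Fml m              -- □φ
  | dia : Fml m → Fml m              -- ◇φ
  | ag  : Fin m → Fml m → Fml m      -- [i]φ
  | dag : Fin m → Fml m → Fml m      -- ⟨i⟩φ

namespace Fml

/-- Negation `φ̄`: replace every connective/modality by its dual and swap `p` with `p̄`. -/
def negF {m : ℕ} : Fml m → Fml m
  | pos p => neg p
  | neg p => pos p
  | and φ ψ => or φ.negF ψ.negF
  | or φ ψ => and φ.negF ψ.negF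
  | box φ => dia φ.negF
  | dia φ => box φ.negF
  | ag i φ => dag i φ.negF
  | dag i φ => ag i φ.negF

/-- `φ → ψ` abbreviates `φ̄ ∨ ψ`. -/
def impF {m : ℕ} (φ ψ : Fml m) : Fml m := or φ.negF ψ

end Fml

/-- `f 0 ∧ f 1 ∧ ⋯ ∧ f k` (left-associated). -/
def conjUpTo {m : ℕ} (f : ℕ → Fml m) : ℕ → Fml m
  | 0 => f 0
  | k+1 => Fml.and (conjUpTo f k) (f (k+1))

/-- `f 0 ∨ f 1 ∨ ⋯ ∨ f k` (left-associated). -/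
def disjUpTo {m : ℕ} (f : ℕ → Fml m) : ℕ → Fml m
  | 0 => f 0
  | k+1 => Fml.or (disjUpTo f k) (f (k+1))

/-- `(f 0)̄ ∧ ((f 1)̄ ∧ ⋯ ((f (j-1))̄ ∧ base))`. -/
def prefNegConj {m : ℕ} (f : ℕ → Fml m) : ℕ → Fml m → Fml m
  | 0, base => base
  | j+1, base => prefNegConj f j (Fml.and (f j).negF base)

/-- The antecedent `◇[i]φ_0 ∧ ◇(φ̄_0 ∧ [i]φ_1) ∧ ⋯ ∧ ◇(φ̄_0 ∧ ⋯ ∧ φ̄_{n'-1} ∧ [i]φ_{n'})`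
of the (n'+1)-choice axiom. -/
def apcAnte {m : ℕ} (i : Fin m) (f : ℕ → Fml m) (n' : ℕ) : Fml m :=
  conjUpTo (fun j => Fml.dia (prefNegConj f j (Fml.ag i (f j)))) n'

/-- The n-choice axiom `APC_n^i` for `n = n' + 1` choices `φ_0, …, φ_{n'}`. -/
def apcAx {m : ℕ} (i : Fin m) (f : ℕ → Fml m) (n' : ℕ) : Fml m :=
  (apcAnte i f n').impF (disjUpTo f n')

def diaAgIdx {m : ℕ} (f : Fin m → Fml m) (j : ℕ) : Fml m :=
  if h : j < m then Fml.dia (Fml.ag ⟨j, h⟩ (f ⟨j, h⟩)) else Fml.pos 0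

def agIdx {m : ℕ} (f : Fin m → Fml m) (j : ℕ) : Fml m :=
  if h : j < m then Fml.ag ⟨j, h⟩ (f ⟨j, h⟩) else Fml.pos 0

/-- The independence-of-agents axiom `⋀_{i∈Ag} ◇[i]φ_i → ◇(⋀_{i∈Ag} [i]φ_i)`
(for `m ≥ 1` agents). -/
def ioaAx {m : ℕ} (f : Fin m → Fml m) : Fml m :=
  (conjUpTo (diaAgIdx f) (m-1)).impF (Fml.dia (conjUpTo (agIdx f) (m-1)))

/-- An `Ldm_n^m`-model on the carrier `W`: each `rel i` is an equivalence relation (C1),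
independence of agents (C2), the `n`-choice condition when `n > 0` (C3), plus a valuation. -/
structure ModelOn (n m : ℕ) (W : Type) : Type where
  nonemp : Nonempty W
  rel : Fin m → W → W → Prop
  refl : ∀ i w, rel i w w
  symm : ∀ i w u, rel i w u → rel i u w
  trans : ∀ i w u v, rel i w u → rel i u v → rel i w v
  ioa : ∀ u : Fin m → W, ∃ v, ∀ i, rel i (u i) v
  apc : 0 < n → ∀ (i : Fin m) (w : Fin (n+1) → W),
      ∃ k j : Fin (n+1), k < j ∧ rel i (w k) (w j)
  val : ℕ → Set W

/-- Satisfaction `M, w ⊩ φ`. -/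
def Sat {n m : ℕ} {W : Type} (M : ModelOn n m W) : W → Fml m → Prop
  | w, .pos p => w ∈ M.val p
  | w, .neg p => w ∉ M.val p
  | w, .and φ ψ => Sat M w φ ∧ Sat M w ψ
  | w, .or φ ψ => Sat M w φ ∨ Sat M w ψ
  | _, .box φ => ∀ u, Sat M u φ
  | _, .dia φ => ∃ u, Sat M u φ
  | w, .ag i φ => ∀ u, M.rel i w u → Sat M u φ
  | w, .dag i φ => ∃ u, M.rel i w u ∧ Sat M u φ

/-- Validity: `⊩ φ`. -/
def Valid (n m : ℕ) (φ : Fml m) : Prop :=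
  ∀ (W : Type) (M : ModelOn n m W) (w : W), Sat M w φ

/-- Semantic consequence `Γ ⊩ φ`. -/
def SemConseq (n m : ℕ) (Γ : Set (Fml m)) (φ : Fml m) : Prop :=
  ∀ (W : Type) (M : ModelOn n m W) (w : W), (∀ ψ ∈ Γ, Sat M w ψ) → Sat M w φ

/-- The Hilbert calculus `Ldm_n^m`: classical propositional logic, S5 for `□` and each
`[i]`, the bridge axiom, IOA, the n-choice axioms (for `n > 0`), with modus ponens and
necessitation (applied to theorems). `Hderiv n m Γ φ` is `Γ ⊢_{Ldm_n^m} φ`. -/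
inductive Hderiv (n m : ℕ) : Set (Fml m) → Fml m → Prop
  | prem {Γ} {φ} (h : φ ∈ Γ) : Hderiv n m Γ φ
  | ax1 {Γ} (φ ψ : Fml m) : Hderiv n m Γ (φ.impF (ψ.impF φ))
  | ax2 {Γ} (φ ψ χ : Fml m) :
      Hderiv n m Γ ((φ.impF (ψ.impF χ)).impF ((φ.impF ψ).impF (φ.impF χ)))
  | ax3 {Γ} (φ ψ : Fml m) :
      Hderiv n m Γ ((ψ.negF.impF φ.negF).impF (φ.impF ψ))
  | boxK {Γ} (φ ψ : Fml m) :
      Hderiv n m Γ ((Fml.box (φ.impF ψ)).impF ((Fml.box φ).impF (Fml.box ψ)))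
  | boxT {Γ} (φ : Fml m) : Hderiv n m Γ ((Fml.box φ).impF φ)
  | box5 {Γ} (φ : Fml m) : Hderiv n m Γ ((Fml.dia φ).impF (Fml.box (Fml.dia φ)))
  | boxDual {Γ} (φ : Fml m) : Hderiv n m Γ (Fml.or (Fml.box φ) (Fml.dia φ.negF))
  | agK {Γ} (i : Fin m) (φ ψ : Fml m) :
      Hderiv n m Γ ((Fml.ag i (φ.impF ψ)).impF ((Fml.ag i φ).impF (Fml.ag i ψ)))
  | agT {Γ} (i : Fin m) (φ : Fml m) : Hderiv n m Γ ((Fml.ag i φ).impF φ)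
  | ag5 {Γ} (i : Fin m) (φ : Fml m) :
      Hderiv n m Γ ((Fml.dag i φ).impF (Fml.ag i (Fml.dag i φ)))
  | agDual {Γ} (i : Fin m) (φ : Fml m) :
      Hderiv n m Γ (Fml.or (Fml.ag i φ) (Fml.dag i φ.negF))
  | bridge {Γ} (i : Fin m) (φ : Fml m) :
      Hderiv n m Γ ((Fml.box φ).impF (Fml.ag i φ))
  | ioa {Γ} (f : Fin m → Fml m) : Hderiv n m Γ (ioaAx f)
  | apc {Γ} (hn : 0 < n) (i : Fin m) (f : ℕ → Fml m) :
      Hderiv n m Γ (apcAx i f (n-1))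
  | mp {Γ} {φ ψ} : Hderiv n m Γ (φ.impF ψ) → Hderiv n m Γ φ → Hderiv n m Γ ψ
  | nec {Γ} {φ} : Hderiv n m ∅ φ → Hderiv n m Γ (Fml.box φ)

/-- A relational atom `R_i x y`. -/
abbrev RAtom (m : ℕ) : Type := Fin m × ℕ × ℕ
/-- The relational part of a labelled sequent: a multiset of relational atoms. -/
abbrev RAtoms (m : ℕ) : Type := Multiset (RAtom m)
/-- A labelled formula `x : φ`. -/
abbrev LFml (m : ℕ) : Type := ℕ × Fml m
/-- The formula part of a labelled sequent: a multiset of labelled formulas. -/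
abbrev LFmls (m : ℕ) : Type := Multiset (LFml m)

/-- The label `v` does not occur in the labelled sequent `R, Γ` (eigenvariable condition). -/
def freshIn {m : ℕ} (v : ℕ) (R : RAtoms m) (Γ : LFmls m) : Prop :=
  (∀ a ∈ R, a.2.1 ≠ v ∧ a.2.2 ≠ v) ∧ ∀ e ∈ Γ, e.1 ≠ v

/-- `Reach R i w u`: `u` is `i`-reachable from `w`, i.e. there is a (possibly empty)
path of `R_i`-atoms of `R` (traversed in either direction) connecting `w` to `u`. -/
inductive Reach {m : ℕ} (R : RAtoms m) (i : Fin m) : ℕ → ℕ → Prop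
  | refl (w : ℕ) : Reach R i w w
  | fwd {w u v : ℕ} : Reach R i w u → ((i, u, v) : RAtom m) ∈ R → Reach R i w v
  | bwd {w u v : ℕ} : Reach R i w u → ((i, v, u) : RAtom m) ∈ R → Reach R i w v

/-- The relational atoms `R_1 u_1 v, …, R_m u_m v` used by the rule (IOA). -/
def ioaAtoms {m : ℕ} (u : Fin m → ℕ) (v : ℕ) : RAtoms m :=
  Multiset.ofList ((List.finRange m).map fun i => ((i, u i, v) : RAtom m))

/-- Which optional rules are present in a labelled calculus, and whether the
`[i]`-rule keeps its principal formula in the premise. -/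
structure Flags : Type where
  refl : Bool    -- (refl_i)
  eucl : Bool    -- (eucl_i)
  diaAg : Bool   -- (⟨i⟩)
  pr : Bool      -- (Pr_i)
  ioa : Bool     -- (IOA)
  agKeep : Bool  -- premise of ([i]) keeps w:[i]φ

/-- `SeqH fl n m h R Γ`: the labelled sequent `R, Γ` has a derivation of height at most
`h` in the labelled calculus determined by `fl` (with parameters `n`, `m`). -/
inductive SeqH (fl : Flags) (n m : ℕ) : ℕ → RAtoms m → LFmls m → Prop
  | id {h : ℕ} {R : RAtoms m} {Γ : LFmls m} (w p : ℕ) :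
      SeqH fl n m h R ((w, Fml.pos p) ::ₘ (w, Fml.neg p) ::ₘ Γ)
  | andR {h R Γ} {w : ℕ} {φ ψ : Fml m} :
      SeqH fl n m h R ((w, Fml.and φ ψ) ::ₘ (w, φ) ::ₘ Γ) →
      SeqH fl n m h R ((w, Fml.and φ ψ) ::ₘ (w, ψ) ::ₘ Γ) →
      SeqH fl n m (h+1) R ((w, Fml.and φ ψ) ::ₘ Γ)
  | orR {h R Γ} {w : ℕ} {φ ψ : Fml m} :
      SeqH fl n m h R ((w, Fml.or φ ψ) ::ₘ (w, φ) ::ₘ (w, ψ) ::ₘ Γ) →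
      SeqH fl n m (h+1) R ((w, Fml.or φ ψ) ::ₘ Γ)
  | boxR {h R Γ} {w v : ℕ} {φ : Fml m}
      (hv : freshIn v R ((w, Fml.box φ) ::ₘ Γ)) :
      SeqH fl n m h R ((w, Fml.box φ) ::ₘ (v, φ) ::ₘ Γ) →
      SeqH fl n m (h+1) R ((w, Fml.box φ) ::ₘ Γ)
  | diaR {h R Γ} {w u : ℕ} {φ : Fml m} :
      SeqH fl n m h R ((w, Fml.dia φ) ::ₘ (u, φ) ::ₘ Γ) →
      SeqH fl n m (h+1) R ((w, Fml.dia φ) ::ₘ Γ)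
  | agR {h R Γ} {w v : ℕ} {i : Fin m} {φ : Fml m} (hfl : fl.agKeep = false)
      (hv : freshIn v R ((w, Fml.ag i φ) ::ₘ Γ)) :
      SeqH fl n m h (((i, w, v) : RAtom m) ::ₘ R) ((v, φ) ::ₘ Γ) →
      SeqH fl n m (h+1) R ((w, Fml.ag i φ) ::ₘ Γ)
  | agRKeep {h R Γ} {w v : ℕ} {i : Fin m} {φ : Fml m} (hfl : fl.agKeep = true)
      (hv : freshIn v R ((w, Fml.ag i φ) ::ₘ Γ)) :
      SeqH fl n m h (((i, w, v) : RAtom m) ::ₘ R) ((w, Fml.ag i φ) ::ₘ (v, φ) ::ₘ Γ) →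
      SeqH fl n m (h+1) R ((w, Fml.ag i φ) ::ₘ Γ)
  | dagR {h R Γ} {w u : ℕ} {i : Fin m} {φ : Fml m} (hfl : fl.diaAg = true) :
      SeqH fl n m h (((i, w, u) : RAtom m) ::ₘ R) ((w, Fml.dag i φ) ::ₘ (u, φ) ::ₘ Γ) →
      SeqH fl n m (h+1) (((i, w, u) : RAtom m) ::ₘ R) ((w, Fml.dag i φ) ::ₘ Γ)
  | reflR {h R Γ} {i : Fin m} {w : ℕ} (hfl : fl.refl = true) :
      SeqH fl n m h (((i, w, w) : RAtom m) ::ₘ R) Γ →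
      SeqH fl n m (h+1) R Γ
  | euclR {h R Γ} {i : Fin m} {w u v : ℕ} (hfl : fl.eucl = true) :
      SeqH fl n m h (((i, w, u) : RAtom m) ::ₘ ((i, w, v) : RAtom m) ::ₘ
        ((i, u, v) : RAtom m) ::ₘ R) Γ →
      SeqH fl n m (h+1) (((i, w, u) : RAtom m) ::ₘ ((i, w, v) : RAtom m) ::ₘ R) Γ
  | ioaR {h R Γ} (hfl : fl.ioa = true) (u : Fin m → ℕ) (v : ℕ) (hv : freshIn v R Γ) :
      SeqH fl n m h (ioaAtoms u v + R) Γ →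
      SeqH fl n m (h+1) R Γ
  | apcR {h R Γ} (hn : 0 < n) (i : Fin m) (w : Fin (n+1) → ℕ) :
      (∀ k j : Fin (n+1), k < j → SeqH fl n m h (((i, w k, w j) : RAtom m) ::ₘ R) Γ) →
      SeqH fl n m (h+1) R Γ
  | prR {h R Γ} {w u : ℕ} {i : Fin m} {φ : Fml m} (hfl : fl.pr = true)
      (hreach : Reach R i w u) :
      SeqH fl n m h R ((w, Fml.dag i φ) ::ₘ (u, φ) ::ₘ Γ) →
      SeqH fl n m (h+1) R ((w, Fml.dag i φ) ::ₘ Γ)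

/-- Derivability (of some height) in the labelled calculus determined by `fl`. -/
def Seq (fl : Flags) (n m : ℕ) (R : RAtoms m) (Γ : LFmls m) : Prop :=
  ∃ h, SeqH fl n m h R Γ

/-- The calculus `G3Ldm_n^m`. -/
def G3flags : Flags := ⟨true, true, true, false, true, false⟩
/-- The calculus `G3Ldm_n^m + PR`. -/
def G3PRflags : Flags := ⟨true, true, true, true, true, false⟩
/-- `G3Ldm_n^m + PR` without the rules `(refl_i)`. -/
def G3PRnoReflFlags : Flags := ⟨false, true, true, true, true, false⟩
/-- `G3Ldm_n^m + PR` without the rules `(eucl_i)`. -/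
def G3PRnoEuclFlags : Flags := ⟨true, false, true, true, true, false⟩
/-- The refined calculus `Ldm_n^m L`. -/
def LdmLflags : Flags := ⟨false, false, false, true, true, true⟩
/-- The refined single-agent calculus `Ldm_n^1 L` (no (IOA)). -/
def LdmL1flags : Flags := ⟨false, false, false, true, false, true⟩

/-- Substitution of the label `y` for the label `x`. -/
def substLab (x y v : ℕ) : ℕ := if v = x then y else v

def substR {m : ℕ} (x y : ℕ) (R : RAtoms m) : RAtoms m :=
  R.map fun a => (a.1, substLab x y a.2.1, substLab x y a.2.2)

def substF {m : ℕ} (x y : ℕ) (Γ : LFmls m) : LFmls m :=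
  Γ.map fun e => (substLab x y e.1, e.2)

/-- Height-preserving invertibility of every inference rule of the calculus given by `fl`. -/
def InvertAll (fl : Flags) (n m : ℕ) : Prop :=
  (∀ h R Γ (w : ℕ) (φ ψ : Fml m), SeqH fl n m h R ((w, Fml.and φ ψ) ::ₘ Γ) →
     SeqH fl n m h R ((w, Fml.and φ ψ) ::ₘ (w, φ) ::ₘ Γ) ∧
     SeqH fl n m h R ((w, Fml.and φ ψ) ::ₘ (w, ψ) ::ₘ Γ)) ∧
  (∀ h R Γ (w : ℕ) (φ ψ : Fml m), SeqH fl n m h R ((w, Fml.or φ ψ) ::ₘ Γ) →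
     SeqH fl n m h R ((w, Fml.or φ ψ) ::ₘ (w, φ) ::ₘ (w, ψ) ::ₘ Γ)) ∧
  (∀ h R Γ (w v : ℕ) (φ : Fml m), freshIn v R ((w, Fml.box φ) ::ₘ Γ) →
     SeqH fl n m h R ((w, Fml.box φ) ::ₘ Γ) →
     SeqH fl n m h R ((w, Fml.box φ) ::ₘ (v, φ) ::ₘ Γ)) ∧
  (∀ h R Γ (w u : ℕ) (φ : Fml m), SeqH fl n m h R ((w, Fml.dia φ) ::ₘ Γ) →
     SeqH fl n m h R ((w, Fml.dia φ) ::ₘ (u, φ) ::ₘ Γ)) ∧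
  (fl.agKeep = false → ∀ h R Γ (w v : ℕ) (i : Fin m) (φ : Fml m),
     freshIn v R ((w, Fml.ag i φ) ::ₘ Γ) →
     SeqH fl n m h R ((w, Fml.ag i φ) ::ₘ Γ) →
     SeqH fl n m h (((i, w, v) : RAtom m) ::ₘ R) ((v, φ) ::ₘ Γ)) ∧
  (fl.agKeep = true → ∀ h R Γ (w v : ℕ) (i : Fin m) (φ : Fml m),
     freshIn v R ((w, Fml.ag i φ) ::ₘ Γ) →
     SeqH fl n m h R ((w, Fml.ag i φ) ::ₘ Γ) →
     SeqH fl n m h (((i, w, v) : RAtom m) ::ₘ R) ((w, Fml.ag i φ) ::ₘ (v, φ) ::ₘ Γ)) ∧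
  (fl.diaAg = true → ∀ h R Γ (w u : ℕ) (i : Fin m) (φ : Fml m),
     SeqH fl n m h (((i, w, u) : RAtom m) ::ₘ R) ((w, Fml.dag i φ) ::ₘ Γ) →
     SeqH fl n m h (((i, w, u) : RAtom m) ::ₘ R) ((w, Fml.dag i φ) ::ₘ (u, φ) ::ₘ Γ)) ∧
  (fl.refl = true → ∀ h R Γ (i : Fin m) (w : ℕ), SeqH fl n m h R Γ →
     SeqH fl n m h (((i, w, w) : RAtom m) ::ₘ R) Γ) ∧
  (fl.eucl = true → ∀ h R Γ (i : Fin m) (w u v : ℕ),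
     SeqH fl n m h (((i, w, u) : RAtom m) ::ₘ ((i, w, v) : RAtom m) ::ₘ R) Γ →
     SeqH fl n m h (((i, w, u) : RAtom m) ::ₘ ((i, w, v) : RAtom m) ::ₘ
       ((i, u, v) : RAtom m) ::ₘ R) Γ) ∧
  (fl.ioa = true → ∀ h R Γ (u : Fin m → ℕ) (v : ℕ), freshIn v R Γ →
     SeqH fl n m h R Γ → SeqH fl n m h (ioaAtoms u v + R) Γ) ∧
  (0 < n → ∀ h R Γ (i : Fin m) (w : Fin (n+1) → ℕ) (k j : Fin (n+1)), k < j →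
     SeqH fl n m h R Γ → SeqH fl n m h (((i, w k, w j) : RAtom m) ::ₘ R) Γ) ∧
  (fl.pr = true → ∀ h R Γ (w u : ℕ) (i : Fin m) (φ : Fml m), Reach R i w u →
     SeqH fl n m h R ((w, Fml.dag i φ) ::ₘ Γ) →
     SeqH fl n m h R ((w, Fml.dag i φ) ::ₘ (u, φ) ::ₘ Γ))

/-- A labelled sequent `R, Γ` is satisfied in `M` under the interpretation `I`. -/
def SeqSat {n m : ℕ} {W : Type} (M : ModelOn n m W) (I : ℕ → W)
    (R : RAtoms m) (Γ : LFmls m) : Prop :=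
  (∀ a ∈ R, M.rel a.1 (I a.2.1) (I a.2.2)) → ∃ e ∈ Γ, Sat M (I e.1) e.2

/-- A labelled sequent is valid: satisfied in every model under every interpretation. -/
def SeqValid (n m : ℕ) (R : RAtoms m) (Γ : LFmls m) : Prop :=
  ∀ (W : Type) (M : ModelOn n m W) (I : ℕ → W), SeqSat M I R Γ

/-! Weakening alone does not survive the induction on derivations: the eigenvariable of
(□), ([i]) or (IOA) may occur in the added context. So prove the stronger statement that
renaming labels by an arbitrary `σ` and then weakening preserves height; in an eigenvariable
case, apply the induction hypothesis to `σ` updated so as to send the eigenvariable to a label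
fresh for the weakened conclusion. -/

section Rename

variable {m : ℕ}

def renameAtoms (σ : ℕ → ℕ) (R : RAtoms m) : RAtoms m :=
  R.map fun a => (a.1, σ a.2.1, σ a.2.2)

def renameFmls (σ : ℕ → ℕ) (Γ : LFmls m) : LFmls m :=
  Γ.map fun e => (σ e.1, e.2)

@[simp]
lemma renameAtoms_cons (σ : ℕ → ℕ) (i : Fin m) (x y : ℕ) (R : RAtoms m) :
    renameAtoms σ ((i, x, y) ::ₘ R) = (i, σ x, σ y) ::ₘ renameAtoms σ R :=
  Multiset.map_cons _ _ _

@[simp]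
lemma renameFmls_cons (σ : ℕ → ℕ) (x : ℕ) (φ : Fml m) (Γ : LFmls m) :
    renameFmls σ ((x, φ) ::ₘ Γ) = (σ x, φ) ::ₘ renameFmls σ Γ :=
  Multiset.map_cons _ _ _

@[simp]
lemma renameAtoms_add (σ : ℕ → ℕ) (R S : RAtoms m) :
    renameAtoms σ (R + S) = renameAtoms σ R + renameAtoms σ S :=
  Multiset.map_add _ _ _

@[simp]
lemma renameAtoms_id (R : RAtoms m) : renameAtoms id R = R := by
  simp [renameAtoms]

@[simp]
lemma renameFmls_id (Γ : LFmls m) : renameFmls id Γ = Γ := by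
  simp [renameFmls]

@[simp]
lemma renameAtoms_ioaAtoms (σ : ℕ → ℕ) (u : Fin m → ℕ) (v : ℕ) :
    renameAtoms σ (ioaAtoms u v) = ioaAtoms (σ ∘ u) (σ v) := by
  simp [renameAtoms, ioaAtoms, Function.comp_def]

end Rename

section Fresh

variable {m : ℕ}

lemma exists_freshIn (R : RAtoms m) (Γ : LFmls m) : ∃ v, freshIn v R Γ := by
  obtain ⟨v, hv⟩ := Infinite.exists_notMem_finset
    (R.map (·.2.1) + R.map (·.2.2) + Γ.map (·.1)).toFinset
  refine ⟨v, fun a ha => ⟨?_, ?_⟩, fun e he => ?_⟩ <;> rintro rfl <;>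
    simp_all [Multiset.mem_map]

lemma freshIn_cons_iff {v : ℕ} {R : RAtoms m} {e : LFml m} {Γ : LFmls m} :
    freshIn v R (e ::ₘ Γ) ↔ e.1 ≠ v ∧ freshIn v R Γ := by
  simp only [freshIn, Multiset.forall_mem_cons]
  tauto

lemma freshIn.renameAtoms_update {v : ℕ} {R : RAtoms m} {Γ : LFmls m} (hv : freshIn v R Γ)
    (σ : ℕ → ℕ) (v' : ℕ) : renameAtoms (Function.update σ v v') R = renameAtoms σ R :=
  Multiset.map_congr rfl fun a ha => by
    simp [Function.update_of_ne (hv.1 a ha).1, Function.update_of_ne (hv.1 a ha).2]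

lemma freshIn.renameFmls_update {v : ℕ} {R : RAtoms m} {Γ : LFmls m} (hv : freshIn v R Γ)
    (σ : ℕ → ℕ) (v' : ℕ) : renameFmls (Function.update σ v v') Γ = renameFmls σ Γ :=
  Multiset.map_congr rfl fun e he => by simp [Function.update_of_ne (hv.2 e he)]

end Fresh

lemma Reach.rename_weaken {m : ℕ} {R : RAtoms m} {i : Fin m} {w u : ℕ} (hr : Reach R i w u)
    (σ : ℕ → ℕ) (R' : RAtoms m) : Reach (R' + renameAtoms σ R) i (σ w) (σ u) := by
  induction hr with
  | refl => exact .refl _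
  | fwd _ hmem ih =>
    exact ih.fwd (Multiset.mem_add.2 <| .inr <| Multiset.mem_map_of_mem _ hmem)
  | bwd _ hmem ih =>
    exact ih.bwd (Multiset.mem_add.2 <| .inr <| Multiset.mem_map_of_mem _ hmem)

theorem SeqH.rename_weaken {fl : Flags} {n m h : ℕ} {R : RAtoms m} {Γ : LFmls m}
    (hd : SeqH fl n m h R Γ) (σ : ℕ → ℕ) (R' : RAtoms m) (Γ' : LFmls m) :
    SeqH fl n m h (R' + renameAtoms σ R) (Γ' + renameFmls σ Γ) := by
  induction hd generalizing σ R' Γ' with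
  | id w p =>
    simp only [renameFmls_cons, Multiset.add_cons]
    exact .id _ _
  | andR _ _ ih₁ ih₂ =>
    have h₁ := ih₁ σ R' Γ'
    have h₂ := ih₂ σ R' Γ'
    simp only [renameFmls_cons, Multiset.add_cons] at h₁ h₂ ⊢
    exact .andR h₁ h₂
  | orR _ ih =>
    have h₁ := ih σ R' Γ'
    simp only [renameFmls_cons, Multiset.add_cons] at h₁ ⊢
    exact .orR h₁
  | diaR _ ih =>
    have h₁ := ih σ R' Γ'
    simp only [renameFmls_cons, Multiset.add_cons] at h₁ ⊢
    exact .diaR h₁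
  | dagR hfl _ ih =>
    have h₁ := ih σ R' Γ'
    simp only [renameAtoms_cons, renameFmls_cons, Multiset.add_cons] at h₁ ⊢
    exact .dagR hfl h₁
  | reflR hfl _ ih =>
    have h₁ := ih σ R' Γ'
    simp only [renameAtoms_cons, Multiset.add_cons] at h₁
    exact .reflR hfl h₁
  | euclR hfl _ ih =>
    have h₁ := ih σ R' Γ'
    simp only [renameAtoms_cons, Multiset.add_cons] at h₁ ⊢
    exact .euclR hfl h₁
  | apcR hn i w _ ih =>
    refine .apcR hn i (σ ∘ w) fun k j hkj => ?_
    simpa only [renameAtoms_cons, Multiset.add_cons, Function.comp_apply] using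
      ih k j hkj σ R' Γ'
  | prR hfl hreach _ ih =>
    have h₁ := ih σ R' Γ'
    simp only [renameFmls_cons, Multiset.add_cons] at h₁ ⊢
    exact .prR hfl (hreach.rename_weaken σ R') h₁
  | @boxR _ R Γ w v φ hv _ ih =>
    simp only [renameFmls_cons, Multiset.add_cons]
    obtain ⟨v', hv'⟩ := exists_freshIn (R' + renameAtoms σ R)
      ((σ w, Fml.box φ) ::ₘ (Γ' + renameFmls σ Γ))
    obtain ⟨hw, hvΓ⟩ := freshIn_cons_iff.1 hv
    have h₁ := ih (Function.update σ v v') R' Γ'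
    simp only [renameFmls_cons, Multiset.add_cons, Function.update_self,
      Function.update_of_ne hw, hvΓ.renameAtoms_update, hvΓ.renameFmls_update] at h₁
    exact .boxR hv' h₁
  | @agR _ R Γ w v i φ hfl hv _ ih =>
    simp only [renameFmls_cons, Multiset.add_cons]
    obtain ⟨v', hv'⟩ := exists_freshIn (R' + renameAtoms σ R)
      ((σ w, Fml.ag i φ) ::ₘ (Γ' + renameFmls σ Γ))
    obtain ⟨hw, hvΓ⟩ := freshIn_cons_iff.1 hv
    have h₁ := ih (Function.update σ v v') R' Γ'
    simp only [renameAtoms_cons, renameFmls_cons, Multiset.add_cons, Function.update_self,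
      Function.update_of_ne hw, hvΓ.renameAtoms_update, hvΓ.renameFmls_update] at h₁
    exact .agR hfl hv' h₁
  | @agRKeep _ R Γ w v i φ hfl hv _ ih =>
    simp only [renameFmls_cons, Multiset.add_cons]
    obtain ⟨v', hv'⟩ := exists_freshIn (R' + renameAtoms σ R)
      ((σ w, Fml.ag i φ) ::ₘ (Γ' + renameFmls σ Γ))
    obtain ⟨hw, hvΓ⟩ := freshIn_cons_iff.1 hv
    have h₁ := ih (Function.update σ v v') R' Γ'
    simp only [renameAtoms_cons, renameFmls_cons, Multiset.add_cons, Function.update_self,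
      Function.update_of_ne hw, hvΓ.renameAtoms_update, hvΓ.renameFmls_update] at h₁
    exact .agRKeep hfl hv' h₁
  | @ioaR _ R Γ hfl u v hv _ ih =>
    obtain ⟨v', hv'⟩ := exists_freshIn (R' + renameAtoms σ R) (Γ' + renameFmls σ Γ)
    have h₁ := ih (Function.update σ v v') R' Γ'
    simp only [renameAtoms_add, renameAtoms_ioaAtoms, Function.update_self,
      hv.renameAtoms_update, hv.renameFmls_update, add_left_comm R'] at h₁
    exact .ioaR hfl _ v' hv' h₁

theorem g3_weakening_hp_admissible_general (n m : ℕ)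
    (h : ℕ) (R R' : RAtoms m) (Γ Γ' : LFmls m)
    (hd : SeqH G3flags n m h R Γ) :
    SeqH G3flags n m h (R' + R) (Γ' + Γ) := by
  simpa using hd.rename_weaken id R' Γ'

/-- Weakening is height-preserving admissible in `G3Ldm_n^m`. -/
theorem g3_weakening_hp_admissible (n m : ℕ) (hm : 1 ≤ m)
    (h : ℕ) (R R' : RAtoms m) (Γ Γ' : LFmls m)
    (hd : SeqH G3flags n m h R Γ) :
    SeqH G3flags n m h (R' + R) (Γ' + Γ) :=
  g3_weakening_hp_admissible_general n m h R R' Γ Γ' hd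

end Stit
end

section
/- G3Ldm_n^m is sound and complete relative to the Hilbert calculus Ldm_n^m: for every formula φ ∈ L^m and every label w, the labelled sequent w:φ is derivable in G3Ldm_n^m if and only if ⊢_{Ldm_n^m} φ. -/
namespace Stit

/-!
Both calculi are sound and complete for the class of `Ldm_n^m`-models. Soundness is checked rule
by rule; a label that must be fresh is interpreted by updating the interpretation at that label.
`G3Ldm_n^m` is complete by a fair proof search: starting from an underivable sequent, every rule is
applied over and over, always to an underivable premise. The relational atoms accumulated in the
limit define a model on the labels (reflexive and Euclidean by `(refl_i)` and `(eucl_i)`, with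
(C2) and (C3) by `(IOA)` and `(APC_n^i)`) in which every accumulated formula is false. The Hilbert
calculus is complete by the canonical model on the `□`-cluster of a maximal consistent set: the
canonical relations of the S5 modalities `□` and `[i]` are equivalences, and the axioms (IOA) and
(APC) yield the frame conditions (C2) and (C3).
-/

@[simp] theorem Fml.negF_negF {m : ℕ} (φ : Fml m) : φ.negF.negF = φ := by
  induction φ <;> simp [Fml.negF, *]

section FiniteConnectives

variable {m : ℕ} {P : Fml m → Prop}

theorem conjUpTo_iff (hP : ∀ φ ψ, P (.and φ ψ) ↔ P φ ∧ P ψ) (f : ℕ → Fml m) (k : ℕ) :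
    P (conjUpTo f k) ↔ ∀ j ≤ k, P (f j) := by
  induction k with
  | zero => simp [conjUpTo]
  | succ k ih => simp only [conjUpTo, hP, ih, ← Nat.lt_succ_iff, Nat.forall_lt_succ_right]

theorem disjUpTo_iff (hP : ∀ φ ψ, P (.or φ ψ) ↔ P φ ∨ P ψ) (f : ℕ → Fml m) (k : ℕ) :
    P (disjUpTo f k) ↔ ∃ j ≤ k, P (f j) := by
  induction k with
  | zero => simp [disjUpTo]
  | succ k ih => simp only [disjUpTo, hP, ih, ← Nat.lt_succ_iff, Nat.exists_lt_succ_right]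

theorem prefNegConj_iff (hP : ∀ φ ψ, P (.and φ ψ) ↔ P φ ∧ P ψ) (hneg : ∀ φ, P φ.negF ↔ ¬ P φ)
    (f : ℕ → Fml m) (j : ℕ) (base : Fml m) :
    P (prefNegConj f j base) ↔ (∀ l < j, ¬ P (f l)) ∧ P base := by
  induction j generalizing base with
  | zero => simp [prefNegConj]
  | succ j ih =>
    simp only [prefNegConj, ih, hP, hneg, Nat.forall_lt_succ_right]
    tauto

end FiniteConnectives

section Semantics

variable {n m : ℕ} {W : Type} (M : ModelOn n m W)

theorem sat_negF (φ : Fml m) (w : W) : Sat M w φ.negF ↔ ¬ Sat M w φ := by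
  induction φ generalizing w <;> simp_all [Fml.negF, Sat, imp_iff_not_or]

theorem sat_impF (φ ψ : Fml m) (w : W) : Sat M w (φ.impF ψ) ↔ (Sat M w φ → Sat M w ψ) := by
  simp only [Fml.impF, Sat, sat_negF]
  tauto

theorem sat_conjUpTo (f : ℕ → Fml m) (k : ℕ) (w : W) :
    Sat M w (conjUpTo f k) ↔ ∀ j ≤ k, Sat M w (f j) :=
  conjUpTo_iff (fun _ _ => Iff.rfl) f k

theorem sat_disjUpTo (f : ℕ → Fml m) (k : ℕ) (w : W) :
    Sat M w (disjUpTo f k) ↔ ∃ j ≤ k, Sat M w (f j) :=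
  disjUpTo_iff (fun _ _ => Iff.rfl) f k

theorem sat_prefNegConj (f : ℕ → Fml m) (j : ℕ) (base : Fml m) (w : W) :
    Sat M w (prefNegConj f j base) ↔ (∀ l < j, ¬ Sat M w (f l)) ∧ Sat M w base :=
  prefNegConj_iff (fun _ _ => Iff.rfl) (fun φ => sat_negF M φ w) f j base

theorem rel_of_reach {I : ℕ → W} {R : RAtoms m} {i : Fin m} {w u : ℕ}
    (hR : ∀ a ∈ R, M.rel a.1 (I a.2.1) (I a.2.2)) (h : Reach R i w u) : M.rel i (I w) (I u) := by
  induction h with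
  | refl => exact M.refl i _
  | fwd _ ha ih => exact M.trans i _ _ _ ih (hR _ ha)
  | bwd _ ha ih => exact M.trans i _ _ _ ih (M.symm i _ _ (hR _ ha))

variable {I : ℕ → W} {v : ℕ} {x : W}

theorem forall_rel_update_iff_of_fresh {R : RAtoms m} (hv : ∀ a ∈ R, a.2.1 ≠ v ∧ a.2.2 ≠ v) :
    (∀ a ∈ R, M.rel a.1 (Function.update I v x a.2.1) (Function.update I v x a.2.2)) ↔
      ∀ a ∈ R, M.rel a.1 (I a.2.1) (I a.2.2) := by
  refine forall₂_congr fun a ha => ?_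
  rw [Function.update_of_ne (hv a ha).1, Function.update_of_ne (hv a ha).2]

theorem exists_sat_update_iff_of_fresh {Γ : LFmls m} (hv : ∀ e ∈ Γ, e.1 ≠ v) :
    (∃ e ∈ Γ, Sat M (Function.update I v x e.1) e.2) ↔ ∃ e ∈ Γ, Sat M (I e.1) e.2 := by
  refine exists_congr fun e => and_congr_right fun he => ?_
  rw [Function.update_of_ne (hv e he)]

end Semantics

section Soundness

variable {n m : ℕ}

theorem valid_ioaAx (hm : 0 < m) (f : Fin m → Fml m) : Valid n m (ioaAx f) := by
  intro W M w
  simp only [ioaAx, sat_impF, sat_conjUpTo, Sat]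
  intro hante
  have hchoice (i : Fin m) : ∃ u, Sat M u (.ag i (f i)) := by
    simpa [diaAgIdx, Sat] using hante i (Nat.le_sub_one_of_lt i.isLt)
  choose u hu using hchoice
  obtain ⟨v, hv⟩ := M.ioa u
  refine ⟨v, fun j hj => ?_⟩
  have hjm : j < m := by omega
  simp only [agIdx, dif_pos hjm, Sat]
  exact fun z hz => hu ⟨j, hjm⟩ z (M.trans _ _ _ _ (hv ⟨j, hjm⟩) hz)

/-- The world `w` and witnesses `u_0, …, u_{n-1}` of the conjuncts of the antecedent are `n + 1`
worlds; two of them are `i`-related by (C3), which either makes `w` satisfy a disjunct or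
contradicts a negated prefix. -/
theorem valid_apcAx (hn : 0 < n) (i : Fin m) (f : ℕ → Fml m) : Valid n m (apcAx i f (n - 1)) := by
  intro W M w
  simp only [apcAx, apcAnte, sat_impF, sat_conjUpTo, sat_disjUpTo, Sat, sat_prefNegConj]
  intro hante
  choose u hu_neg hu_ag using hante
  obtain ⟨k, j, hkj, hrel⟩ := M.apc hn i (Fin.cons w fun l : Fin n => u l (by omega))
  cases j using Fin.cases with
  | zero => exact absurd hkj (Fin.not_lt_zero k)
  | succ j =>
    cases k using Fin.cases with
    | zero =>
      simp only [Fin.cons_zero, Fin.cons_succ] at hrel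
      exact ⟨j, by omega, hu_ag _ _ w (M.symm _ _ _ hrel)⟩
    | succ k =>
      simp only [Fin.cons_succ] at hrel
      exact absurd (hu_ag _ _ _ hrel) (hu_neg _ _ k (by simpa using hkj))

theorem semConseq_of_hderiv (hm : 0 < m) {Γ : Set (Fml m)} {φ : Fml m} (d : Hderiv n m Γ φ) :
    SemConseq n m Γ φ := by
  induction d with
  | prem h => exact fun _ _ _ hΓ => hΓ _ h
  | ioa f => exact fun W M w _ => valid_ioaAx hm f W M w
  | apc hn i f => exact fun W M w _ => valid_apcAx hn i f W M w
  | mp _ _ ih₁ ih₂ => exact fun W M w hΓ => (sat_impF M _ _ w).mp (ih₁ W M w hΓ) (ih₂ W M w hΓ)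
  | nec _ ih => exact fun W M _ _ u => ih W M u (by simp)
  | ax1 | ax2 | ax3 => intro W M w _; simp only [sat_impF, sat_negF]; tauto
  | boxK => intro W M w _; simp only [sat_impF, Sat]; exact fun h₁ h₂ u => h₁ u (h₂ u)
  | agK => intro W M w _; simp only [sat_impF, Sat]; exact fun h₁ h₂ u hu => h₁ u hu (h₂ u hu)
  | boxT => intro W M w _; simp only [sat_impF, Sat]; exact fun h => h w
  | agT i => intro W M w _; simp only [sat_impF, Sat]; exact fun h => h w (M.refl i w)
  | box5 => intro W M w _; simp only [sat_impF, Sat]; exact fun h _ => h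
  | ag5 =>
    intro W M w _
    simp only [sat_impF, Sat]
    exact fun ⟨u, hu, hφ⟩ z hz => ⟨u, M.trans _ _ _ _ (M.symm _ _ _ hz) hu, hφ⟩
  | bridge => intro W M w _; simp only [sat_impF, Sat]; exact fun h u _ => h u
  | boxDual | agDual => intro W M w _; simp only [sat_negF, Sat]; grind

theorem valid_of_hderiv (hm : 0 < m) {φ : Fml m} (d : Hderiv n m ∅ φ) : Valid n m φ :=
  fun W M w => semConseq_of_hderiv hm d W M w (by simp)

variable {R : RAtoms m} {Γ : LFmls m}

theorem SeqValid.cons {e : LFml m} (h : SeqValid n m R Γ) : SeqValid n m R (e ::ₘ Γ) :=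
  fun W M I hR => (h W M I hR).imp fun _ ⟨he, hsat⟩ => ⟨Multiset.mem_cons_of_mem he, hsat⟩

theorem seqValid_boxR {w v : ℕ} {φ : Fml m} (hv : freshIn v R ((w, .box φ) ::ₘ Γ))
    (h : SeqValid n m R ((w, .box φ) ::ₘ (v, φ) ::ₘ Γ)) : SeqValid n m R ((w, .box φ) ::ₘ Γ) := by
  intro W M I hR
  simp only [freshIn, Multiset.forall_mem_cons] at hv
  by_cases hbox : Sat M (I w) (.box φ)
  · exact ⟨_, Multiset.mem_cons_self _ _, hbox⟩
  obtain ⟨x, hx⟩ : ∃ x, ¬ Sat M x φ := by simpa [Sat] using hbox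
  have h₁ := h W M (Function.update I v x) ((forall_rel_update_iff_of_fresh M hv.1).2 hR)
  simp only [Multiset.mem_cons, exists_eq_or_imp, Function.update_self,
    Function.update_of_ne hv.2.1, exists_sat_update_iff_of_fresh M hv.2.2] at h₁ ⊢
  tauto

theorem seqValid_agRKeep {w v : ℕ} {i : Fin m} {φ : Fml m}
    (hv : freshIn v R ((w, .ag i φ) ::ₘ Γ))
    (h : SeqValid n m (((i, w, v) : RAtom m) ::ₘ R) ((w, .ag i φ) ::ₘ (v, φ) ::ₘ Γ)) :
    SeqValid n m R ((w, .ag i φ) ::ₘ Γ) := by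
  intro W M I hR
  simp only [freshIn, Multiset.forall_mem_cons] at hv
  by_cases hag : Sat M (I w) (.ag i φ)
  · exact ⟨_, Multiset.mem_cons_self _ _, hag⟩
  obtain ⟨x, hwx, hx⟩ : ∃ x, M.rel i (I w) x ∧ ¬ Sat M x φ := by simpa [Sat] using hag
  have hR' : ∀ a ∈ ((i, w, v) : RAtom m) ::ₘ R,
      M.rel a.1 (Function.update I v x a.2.1) (Function.update I v x a.2.2) := by
    rw [Multiset.forall_mem_cons, forall_rel_update_iff_of_fresh M hv.1]
    exact ⟨by simpa [Function.update_of_ne hv.2.1] using hwx, hR⟩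
  have h₁ := h W M (Function.update I v x) hR'
  simp only [Multiset.mem_cons, exists_eq_or_imp, Function.update_self,
    Function.update_of_ne hv.2.1, exists_sat_update_iff_of_fresh M hv.2.2] at h₁ ⊢
  tauto

theorem seqValid_ioaR (u : Fin m → ℕ) {v : ℕ} (hv : freshIn v R Γ)
    (h : SeqValid n m (ioaAtoms u v + R) Γ) : SeqValid n m R Γ := by
  intro W M I hR
  obtain ⟨x, hx⟩ := M.ioa (I ∘ u)
  have hR' : ∀ a ∈ ioaAtoms u v + R,
      M.rel a.1 (Function.update I v x a.2.1) (Function.update I v x a.2.2) := by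
    simp only [Multiset.mem_add, or_imp, forall_and, forall_rel_update_iff_of_fresh M hv.1]
    refine ⟨fun a ha => ?_, hR⟩
    obtain ⟨i, -, rfl⟩ := List.mem_map.1 (Multiset.mem_coe.1 ha)
    by_cases hui : u i = v
    · simpa [hui] using M.refl i x
    · simpa [Function.update_of_ne hui] using hx i
  obtain ⟨e, he, hsat⟩ := h W M (Function.update I v x) hR'
  exact ⟨e, he, by rwa [Function.update_of_ne (hv.2 e he)] at hsat⟩

theorem SeqValid.of_cons_cons {p q : LFml m} (h : SeqValid n m R (p ::ₘ q ::ₘ Γ))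
    (hqp : ∀ {W : Type} (M : ModelOn n m W) (I : ℕ → W),
      (∀ a ∈ R, M.rel a.1 (I a.2.1) (I a.2.2)) → Sat M (I q.1) q.2 → Sat M (I p.1) p.2) :
    SeqValid n m R (p ::ₘ Γ) := by
  intro W M I hR
  have h₁ := h W M I hR
  have hqp := hqp M I hR
  simp only [Multiset.mem_cons, exists_eq_or_imp] at h₁ ⊢
  tauto

theorem seqValid_of_seqH {fl : Flags} {h : ℕ} (d : SeqH fl n m h R Γ) : SeqValid n m R Γ := by
  induction d with
  | id w p =>
    intro W M I _
    by_cases hp : I w ∈ M.val p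
    · exact ⟨(w, .pos p), by simp, hp⟩
    · exact ⟨(w, .neg p), by simp, hp⟩
  | andR _ _ ih₁ ih₂ =>
    intro W M I hR
    have h₁ := ih₁ W M I hR
    have h₂ := ih₂ W M I hR
    simp only [Multiset.mem_cons, exists_eq_or_imp, Sat] at h₁ h₂ ⊢
    tauto
  | orR _ ih => exact (ih.of_cons_cons fun _ _ _ => .inl).of_cons_cons fun _ _ _ => .inr
  | diaR _ ih => exact ih.of_cons_cons fun _ _ _ h => ⟨_, h⟩
  | dagR _ _ ih => exact ih.of_cons_cons fun _ _ hR h => ⟨_, hR _ (Multiset.mem_cons_self _ _), h⟩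
  | prR _ hreach _ ih => exact ih.of_cons_cons fun M _ hR h => ⟨_, rel_of_reach M hR hreach, h⟩
  | boxR hv _ ih => exact seqValid_boxR hv ih
  | agR _ hv _ ih => exact seqValid_agRKeep hv ih.cons
  | agRKeep _ hv _ ih => exact seqValid_agRKeep hv ih
  | ioaR _ u _ hv _ ih => exact seqValid_ioaR u hv ih
  | reflR _ _ ih => exact fun W M I hR => ih W M I (Multiset.forall_mem_cons.2 ⟨M.refl _ _, hR⟩)
  | euclR _ _ ih =>
    intro W M I hR
    simp only [Multiset.forall_mem_cons] at hR
    obtain ⟨hwu, hwv, hR⟩ := hR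
    refine ih W M I (Multiset.forall_mem_cons.2 ⟨hwu, Multiset.forall_mem_cons.2 ⟨hwv, ?_⟩⟩)
    exact Multiset.forall_mem_cons.2 ⟨M.trans _ _ _ _ (M.symm _ _ _ hwu) hwv, hR⟩
  | apcR hn i w _ ih =>
    intro W M I hR
    obtain ⟨k, j, hkj, hrel⟩ := M.apc hn i (I ∘ w)
    exact ih k j hkj W M I (Multiset.forall_mem_cons.2 ⟨hrel, hR⟩)

theorem valid_of_seq {fl : Flags} {φ : Fml m} {w : ℕ} (d : Seq fl n m 0 {(w, φ)}) :
    Valid n m φ := by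
  intro W M x
  obtain ⟨_, d⟩ := d
  obtain ⟨e, he, hsat⟩ := seqValid_of_seqH d W M (fun _ => x) (by simp)
  rwa [Multiset.mem_singleton.1 he] at hsat

end Soundness

section ProofSearch

namespace Fml

def encode {m : ℕ} : Fml m → ℕ
  | pos p => Nat.pair 0 p
  | neg p => Nat.pair 1 p
  | and φ ψ => Nat.pair 2 (Nat.pair φ.encode ψ.encode)
  | or φ ψ => Nat.pair 3 (Nat.pair φ.encode ψ.encode)
  | box φ => Nat.pair 4 φ.encode
  | dia φ => Nat.pair 5 φ.encode
  | ag i φ => Nat.pair 6 (Nat.pair i φ.encode)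
  | dag i φ => Nat.pair 7 (Nat.pair i φ.encode)

theorem encode_injective {m : ℕ} : Function.Injective (@encode m) := by
  intro φ ψ h
  induction φ generalizing ψ <;> cases ψ <;>
    simp_all [encode, Nat.pair_eq_pair, Fin.val_inj] <;> aesop

instance {m : ℕ} : DecidableEq (Fml m) :=
  fun φ ψ => decidable_of_iff (φ.encode = ψ.encode) encode_injective.eq_iff

instance {m : ℕ} : Countable (Fml m) := encode_injective.countable

end Fml

section Rules

variable {fl : Flags} {n m : ℕ} {R : RAtoms m} {Γ : LFmls m}

theorem SeqH.succ {h : ℕ} (d : SeqH fl n m h R Γ) : SeqH fl n m (h + 1) R Γ := by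
  induction d with
  | id w p => exact .id w p
  | andR _ _ ih₁ ih₂ => exact .andR ih₁ ih₂
  | orR _ ih => exact .orR ih
  | boxR hv _ ih => exact .boxR hv ih
  | diaR _ ih => exact .diaR ih
  | agR hfl hv _ ih => exact .agR hfl hv ih
  | agRKeep hfl hv _ ih => exact .agRKeep hfl hv ih
  | dagR hfl _ ih => exact .dagR hfl ih
  | reflR hfl _ ih => exact .reflR hfl ih
  | euclR hfl _ ih => exact .euclR hfl ih
  | ioaR hfl u v hv _ ih => exact .ioaR hfl u v hv ih
  | apcR hn i w _ ih => exact .apcR hn i w ih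
  | prR hfl hreach _ ih => exact .prR hfl hreach ih

theorem SeqH.mono {h h' : ℕ} (d : SeqH fl n m h R Γ) (hle : h ≤ h') : SeqH fl n m h' R Γ := by
  induction hle with
  | refl => exact d
  | step _ ih => exact ih.succ

namespace Seq

theorem of_mem_id {w p : ℕ} (hpos : (w, .pos p) ∈ Γ) (hneg : (w, .neg p) ∈ Γ) :
    Seq fl n m R Γ := by
  obtain ⟨Γ, rfl⟩ := Multiset.exists_cons_of_mem hpos
  obtain ⟨Γ, rfl⟩ := Multiset.exists_cons_of_mem ((Multiset.mem_cons.1 hneg).resolve_left (by simp))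
  exact ⟨0, .id w p⟩

theorem of_mem_and {w : ℕ} {φ ψ : Fml m} (hmem : (w, .and φ ψ) ∈ Γ)
    (h₁ : Seq fl n m R ((w, φ) ::ₘ Γ)) (h₂ : Seq fl n m R ((w, ψ) ::ₘ Γ)) : Seq fl n m R Γ := by
  obtain ⟨Γ, rfl⟩ := Multiset.exists_cons_of_mem hmem
  obtain ⟨k₁, d₁⟩ := h₁
  obtain ⟨k₂, d₂⟩ := h₂
  rw [Multiset.cons_swap] at d₁ d₂
  exact ⟨max k₁ k₂ + 1, .andR (d₁.mono (le_max_left _ _)) (d₂.mono (le_max_right _ _))⟩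

theorem of_mem_or {w : ℕ} {φ ψ : Fml m} (hmem : (w, .or φ ψ) ∈ Γ)
    (h : Seq fl n m R ((w, φ) ::ₘ (w, ψ) ::ₘ Γ)) : Seq fl n m R Γ := by
  obtain ⟨Γ, rfl⟩ := Multiset.exists_cons_of_mem hmem
  obtain ⟨k, d⟩ := h
  rw [Multiset.cons_swap (w, ψ), Multiset.cons_swap (w, φ)] at d
  exact ⟨k + 1, .orR d⟩

theorem of_mem_box {w v : ℕ} {φ : Fml m} (hmem : (w, .box φ) ∈ Γ) (hv : freshIn v R Γ)
    (h : Seq fl n m R ((v, φ) ::ₘ Γ)) : Seq fl n m R Γ := by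
  obtain ⟨Γ, rfl⟩ := Multiset.exists_cons_of_mem hmem
  obtain ⟨k, d⟩ := h
  rw [Multiset.cons_swap] at d
  exact ⟨k + 1, .boxR hv d⟩

theorem of_mem_dia {w u : ℕ} {φ : Fml m} (hmem : (w, .dia φ) ∈ Γ)
    (h : Seq fl n m R ((u, φ) ::ₘ Γ)) : Seq fl n m R Γ := by
  obtain ⟨Γ, rfl⟩ := Multiset.exists_cons_of_mem hmem
  obtain ⟨k, d⟩ := h
  rw [Multiset.cons_swap] at d
  exact ⟨k + 1, .diaR d⟩

theorem of_mem_ag (hfl : fl.agKeep = false) {w v : ℕ} {i : Fin m} {φ : Fml m}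
    (hmem : (w, .ag i φ) ∈ Γ) (hv : freshIn v R Γ)
    (h : Seq fl n m (((i, w, v) : RAtom m) ::ₘ R) ((v, φ) ::ₘ Γ.erase (w, .ag i φ))) :
    Seq fl n m R Γ := by
  rw [← Multiset.cons_erase hmem] at hv ⊢
  obtain ⟨k, d⟩ := h
  exact ⟨k + 1, .agR hfl hv d⟩

theorem of_mem_dag (hfl : fl.diaAg = true) {w u : ℕ} {i : Fin m} {φ : Fml m}
    (hmem : (w, .dag i φ) ∈ Γ) (hatom : ((i, w, u) : RAtom m) ∈ R)
    (h : Seq fl n m R ((u, φ) ::ₘ Γ)) : Seq fl n m R Γ := by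
  obtain ⟨Γ, rfl⟩ := Multiset.exists_cons_of_mem hmem
  obtain ⟨R, rfl⟩ := Multiset.exists_cons_of_mem hatom
  obtain ⟨k, d⟩ := h
  rw [Multiset.cons_swap] at d
  exact ⟨k + 1, .dagR hfl d⟩

theorem of_refl (hfl : fl.refl = true) (i : Fin m) (w : ℕ)
    (h : Seq fl n m (((i, w, w) : RAtom m) ::ₘ R) Γ) : Seq fl n m R Γ := by
  obtain ⟨k, d⟩ := h
  exact ⟨k + 1, .reflR hfl d⟩

theorem of_mem_eucl (hfl : fl.eucl = true) {i : Fin m} {w u v : ℕ}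
    (hu : ((i, w, u) : RAtom m) ∈ R) (hv : ((i, w, v) : RAtom m) ∈ R) (huv : u ≠ v)
    (h : Seq fl n m (((i, u, v) : RAtom m) ::ₘ R) Γ) : Seq fl n m R Γ := by
  obtain ⟨R, rfl⟩ := Multiset.exists_cons_of_mem hu
  obtain ⟨R, rfl⟩ := Multiset.exists_cons_of_mem
    ((Multiset.mem_cons.1 hv).resolve_left (by simp [Ne.symm huv]))
  obtain ⟨k, d⟩ := h
  rw [Multiset.cons_swap _ ((i, w, u) : RAtom m), Multiset.cons_swap _ ((i, w, v) : RAtom m)] at d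
  exact ⟨k + 1, .euclR hfl d⟩

theorem of_ioa (hfl : fl.ioa = true) (u : Fin m → ℕ) {v : ℕ} (hv : freshIn v R Γ)
    (h : Seq fl n m (ioaAtoms u v + R) Γ) : Seq fl n m R Γ := by
  obtain ⟨k, d⟩ := h
  exact ⟨k + 1, .ioaR hfl u v hv d⟩

theorem of_apc (hn : 0 < n) (i : Fin m) (w : Fin (n + 1) → ℕ)
    (h : ∀ k j : Fin (n + 1), k < j → Seq fl n m (((i, w k, w j) : RAtom m) ::ₘ R) Γ) :
    Seq fl n m R Γ := by
  have hheight (p : Fin (n + 1) × Fin (n + 1)) :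
      ∃ k, p.1 < p.2 → SeqH fl n m k (((i, w p.1, w p.2) : RAtom m) ::ₘ R) Γ := by
    by_cases hp : p.1 < p.2
    · exact (h p.1 p.2 hp).imp fun _ d _ => d
    · exact ⟨0, fun hp' => absurd hp' hp⟩
  choose k hk using hheight
  exact ⟨Finset.univ.sup k + 1, .apcR hn i w fun a b hab =>
    (hk (a, b) hab).mono (Finset.le_sup (Finset.mem_univ (a, b)))⟩

end Seq

end Rules

inductive SearchTask (n m : ℕ) : Type
  | and (x : ℕ) (φ ψ : Fml m)
  | or (x : ℕ) (φ ψ : Fml m)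
  | box (x : ℕ) (φ : Fml m)
  | dia (x u : ℕ) (φ : Fml m)
  | ag (x : ℕ) (i : Fin m) (φ : Fml m)
  | dag (x u : ℕ) (i : Fin m) (φ : Fml m)
  | refl (i : Fin m) (x : ℕ)
  | eucl (i : Fin m) (x y z : ℕ)
  | ioa (u : Fin m → ℕ)
  | apc (i : Fin m) (w : Fin (n + 1) → ℕ)

namespace SearchTask

variable {n m : ℕ}

def code : SearchTask n m → ℕ × List ℕ
  | and x φ ψ => (0, [x, φ.encode, ψ.encode])
  | or x φ ψ => (1, [x, φ.encode, ψ.encode])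
  | box x φ => (2, [x, φ.encode])
  | dia x u φ => (3, [x, u, φ.encode])
  | ag x i φ => (4, [x, i, φ.encode])
  | dag x u i φ => (5, [x, u, i, φ.encode])
  | refl i x => (6, [i, x])
  | eucl i x y z => (7, [i, x, y, z])
  | ioa u => (8, List.ofFn u)
  | apc i w => (9, i :: List.ofFn w)

theorem code_injective : Function.Injective (@code n m) := by
  intro τ σ h
  cases τ <;> cases σ <;>
    simp_all [code, Fin.val_inj, Fml.encode_injective.eq_iff, funext_iff, Fin.forall_fin_succ]

instance : Countable (SearchTask n m) := code_injective.countable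

instance : Nonempty (SearchTask n m) := ⟨.box 0 (.pos 0)⟩

end SearchTask

/-- Time `t` runs task number `t.unpair.1`, so every task recurs after any given time. -/
noncomputable def schedule (n m : ℕ) (t : ℕ) : SearchTask n m :=
  (exists_surjective_nat (SearchTask n m)).choose t.unpair.1

variable {n m : ℕ}

theorem exists_schedule_eq (τ : SearchTask n m) (t₀ : ℕ) :
    ∃ t, t₀ ≤ t ∧ schedule n m t = τ := by
  obtain ⟨k, hk⟩ := (exists_surjective_nat (SearchTask n m)).choose_spec τ
  exact ⟨Nat.pair k t₀, Nat.right_le_pair k t₀, by simp [schedule, hk]⟩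

structure Sequent (m : ℕ) : Type where
  atoms : RAtoms m
  fmls : LFmls m

namespace Sequent

def fresh (S : Sequent m) : ℕ :=
  (S.atoms.map fun a => max a.2.1 a.2.2 + 1).sup ⊔ (S.fmls.map fun e => e.1 + 1).sup

theorem freshIn_fresh (S : Sequent m) : freshIn S.fresh S.atoms S.fmls := by
  refine ⟨fun a ha => ?_, fun e he => ?_⟩
  · have : max a.2.1 a.2.2 + 1 ≤ S.fresh :=
      (Multiset.le_sup (Multiset.mem_map_of_mem (fun a : RAtom m => max a.2.1 a.2.2 + 1) ha)).trans
        le_sup_left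
    omega
  · have : e.1 + 1 ≤ S.fresh :=
      (Multiset.le_sup (Multiset.mem_map_of_mem (fun e : LFml m => e.1 + 1) he)).trans le_sup_right
    omega

open Classical in
/-- Applies the rule named by the task backwards when it is applicable, choosing an underivable
premise if there is one. -/
noncomputable def step (S : Sequent m) : SearchTask n m → Sequent m
  | .and x φ ψ =>
    if (x, .and φ ψ) ∈ S.fmls then
      if Seq G3flags n m S.atoms ((x, φ) ::ₘ S.fmls) then ⟨S.atoms, (x, ψ) ::ₘ S.fmls⟩
      else ⟨S.atoms, (x, φ) ::ₘ S.fmls⟩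
    else S
  | .or x φ ψ => if (x, .or φ ψ) ∈ S.fmls then ⟨S.atoms, (x, φ) ::ₘ (x, ψ) ::ₘ S.fmls⟩ else S
  | .box x φ => if (x, .box φ) ∈ S.fmls then ⟨S.atoms, (S.fresh, φ) ::ₘ S.fmls⟩ else S
  | .dia x u φ => if (x, .dia φ) ∈ S.fmls then ⟨S.atoms, (u, φ) ::ₘ S.fmls⟩ else S
  | .ag x i φ =>
    if (x, .ag i φ) ∈ S.fmls then
      ⟨(i, x, S.fresh) ::ₘ S.atoms, (S.fresh, φ) ::ₘ S.fmls.erase (x, .ag i φ)⟩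
    else S
  | .dag x u i φ =>
    if (x, .dag i φ) ∈ S.fmls ∧ (i, x, u) ∈ S.atoms then ⟨S.atoms, (u, φ) ::ₘ S.fmls⟩ else S
  | .refl i x => ⟨(i, x, x) ::ₘ S.atoms, S.fmls⟩
  | .eucl i x y z =>
    if (i, x, y) ∈ S.atoms ∧ (i, x, z) ∈ S.atoms ∧ y ≠ z then ⟨(i, y, z) ::ₘ S.atoms, S.fmls⟩
    else S
  | .ioa u => ⟨ioaAtoms u S.fresh + S.atoms, S.fmls⟩
  | .apc i w =>
    if h : ∃ p : Fin (n + 1) × Fin (n + 1), p.1 < p.2 ∧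
        ¬ Seq G3flags n m (((i, w p.1, w p.2) : RAtom m) ::ₘ S.atoms) S.fmls then
      ⟨(i, w h.choose.1, w h.choose.2) ::ₘ S.atoms, S.fmls⟩
    else S

theorem not_seq_step {S : Sequent m} (hS : ¬ Seq G3flags n m S.atoms S.fmls)
    (τ : SearchTask n m) : ¬ Seq G3flags n m (S.step τ).atoms (S.step τ).fmls := by
  intro hstep
  apply hS
  cases τ with
  | and x φ ψ =>
    simp only [step] at hstep
    split_ifs at hstep with hmem hφ
    exacts [Seq.of_mem_and hmem hφ hstep, absurd hstep hφ, hstep]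
  | or =>
    simp only [step] at hstep
    split_ifs at hstep with hmem
    exacts [Seq.of_mem_or hmem hstep, hstep]
  | box =>
    simp only [step] at hstep
    split_ifs at hstep with hmem
    exacts [Seq.of_mem_box hmem S.freshIn_fresh hstep, hstep]
  | dia =>
    simp only [step] at hstep
    split_ifs at hstep with hmem
    exacts [Seq.of_mem_dia hmem hstep, hstep]
  | ag =>
    simp only [step] at hstep
    split_ifs at hstep with hmem
    exacts [Seq.of_mem_ag rfl hmem S.freshIn_fresh hstep, hstep]
  | dag =>
    simp only [step] at hstep
    split_ifs at hstep with hmem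
    exacts [Seq.of_mem_dag rfl hmem.1 hmem.2 hstep, hstep]
  | refl i x => exact Seq.of_refl rfl i x hstep
  | eucl =>
    simp only [step] at hstep
    split_ifs at hstep with hmem
    exacts [Seq.of_mem_eucl rfl hmem.1 hmem.2.1 hmem.2.2 hstep, hstep]
  | ioa u => exact Seq.of_ioa rfl u S.freshIn_fresh hstep
  | apc =>
    simp only [step] at hstep
    split_ifs at hstep with hex
    exacts [absurd hstep hex.choose_spec.2, hstep]

theorem atoms_subset_step (S : Sequent m) (τ : SearchTask n m) : S.atoms ⊆ (S.step τ).atoms := by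
  intro a ha
  cases τ <;> simp only [step] <;> (try split_ifs) <;> simp [ha]

theorem mem_fmls_step {S : Sequent m} {e : LFml m} (he : e ∈ S.fmls) (τ : SearchTask n m) :
    e ∈ (S.step τ).fmls ∨ ∃ i φ, e.2 = .ag i φ ∧ τ = .ag e.1 i φ := by
  cases τ with
  | ag x i φ =>
    by_cases hprincipal : e = (x, .ag i φ)
    · subst hprincipal
      exact .inr ⟨i, φ, rfl, rfl⟩
    · simp only [step]
      split_ifs <;> simp [Multiset.mem_erase_of_ne hprincipal, he]
  | _ => left; simp only [step]; (try split_ifs) <;> simp [he]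

end Sequent

section Saturation

variable (n) (S₀ : Sequent m)

noncomputable def searchChain : ℕ → Sequent m
  | 0 => S₀
  | t + 1 => (searchChain t).step (schedule n m t)

def limAtoms : Set (RAtom m) := {a | ∃ t, a ∈ (searchChain n S₀ t).atoms}

def limFmls : Set (LFml m) := {e | ∃ t, e ∈ (searchChain n S₀ t).fmls}

variable {n S₀}

theorem not_seq_searchChain (h₀ : ¬ Seq G3flags n m S₀.atoms S₀.fmls) (t : ℕ) :
    ¬ Seq G3flags n m (searchChain n S₀ t).atoms (searchChain n S₀ t).fmls := by
  induction t with
  | zero => exact h₀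
  | succ t ih => exact Sequent.not_seq_step ih _

theorem searchChain_atoms_mono {t t' : ℕ} (htt' : t ≤ t') {a : RAtom m}
    (ha : a ∈ (searchChain n S₀ t).atoms) : a ∈ (searchChain n S₀ t').atoms := by
  induction htt' with
  | refl => exact ha
  | step _ ih => exact Sequent.atoms_subset_step _ _ ih

theorem searchChain_fmls_mono {t t' : ℕ} (htt' : t ≤ t') {e : LFml m}
    (hne : ∀ i φ, e.2 ≠ .ag i φ) (he : e ∈ (searchChain n S₀ t).fmls) :
    e ∈ (searchChain n S₀ t').fmls := by
  induction htt' with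
  | refl => exact he
  | step _ ih =>
    obtain h | ⟨i, φ, heq, -⟩ := Sequent.mem_fmls_step ih (schedule n m _)
    exacts [h, absurd heq (hne i φ)]

theorem exists_scheduled_of_mem_limFmls {e : LFml m} (hne : ∀ i φ, e.2 ≠ .ag i φ)
    (he : e ∈ limFmls n S₀) (τ : SearchTask n m) :
    ∃ t, e ∈ (searchChain n S₀ t).fmls ∧ schedule n m t = τ := by
  obtain ⟨t₀, ht₀⟩ := he
  obtain ⟨t, ht, hτ⟩ := exists_schedule_eq τ t₀
  exact ⟨t, searchChain_fmls_mono ht hne ht₀, hτ⟩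

theorem limFmls_and {x : ℕ} {φ ψ : Fml m} (he : (x, .and φ ψ) ∈ limFmls n S₀) :
    (x, φ) ∈ limFmls n S₀ ∨ (x, ψ) ∈ limFmls n S₀ := by
  obtain ⟨t, hmem, hτ⟩ := exists_scheduled_of_mem_limFmls (by simp) he (.and x φ ψ)
  have : (x, φ) ∈ (searchChain n S₀ (t + 1)).fmls ∨ (x, ψ) ∈ (searchChain n S₀ (t + 1)).fmls := by
    simp only [searchChain, hτ, Sequent.step, if_pos hmem]
    split_ifs <;> simp
  exact this.imp (⟨t + 1, ·⟩) (⟨t + 1, ·⟩)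

theorem limFmls_or {x : ℕ} {φ ψ : Fml m} (he : (x, .or φ ψ) ∈ limFmls n S₀) :
    (x, φ) ∈ limFmls n S₀ ∧ (x, ψ) ∈ limFmls n S₀ := by
  obtain ⟨t, hmem, hτ⟩ := exists_scheduled_of_mem_limFmls (by simp) he (.or x φ ψ)
  exact ⟨⟨t + 1, by simp [searchChain, hτ, Sequent.step, hmem]⟩,
    ⟨t + 1, by simp [searchChain, hτ, Sequent.step, hmem]⟩⟩

theorem limFmls_box {x : ℕ} {φ : Fml m} (he : (x, .box φ) ∈ limFmls n S₀) :
    ∃ v, (v, φ) ∈ limFmls n S₀ := by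
  obtain ⟨t, hmem, hτ⟩ := exists_scheduled_of_mem_limFmls (by simp) he (.box x φ)
  exact ⟨(searchChain n S₀ t).fresh, t + 1, by simp [searchChain, hτ, Sequent.step, hmem]⟩

theorem limFmls_dia {x : ℕ} {φ : Fml m} (he : (x, .dia φ) ∈ limFmls n S₀) (u : ℕ) :
    (u, φ) ∈ limFmls n S₀ := by
  obtain ⟨t, hmem, hτ⟩ := exists_scheduled_of_mem_limFmls (by simp) he (.dia x u φ)
  exact ⟨t + 1, by simp [searchChain, hτ, Sequent.step, hmem]⟩

theorem limFmls_dag {x u : ℕ} {i : Fin m} {φ : Fml m} (he : (x, .dag i φ) ∈ limFmls n S₀)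
    (ha : ((i, x, u) : RAtom m) ∈ limAtoms n S₀) : (u, φ) ∈ limFmls n S₀ := by
  obtain ⟨t₀, ht₀⟩ := he
  obtain ⟨t₁, ht₁⟩ := ha
  obtain ⟨t, ht, hτ⟩ := exists_schedule_eq (n := n) (.dag x u i φ) (max t₀ t₁)
  have hmem := searchChain_fmls_mono (le_of_max_le_left ht) (by simp) ht₀
  have hatom := searchChain_atoms_mono (le_of_max_le_right ht) ht₁
  exact ⟨t + 1, by simp [searchChain, hτ, Sequent.step, hmem, hatom]⟩

theorem limAtoms_refl (i : Fin m) (x : ℕ) : ((i, x, x) : RAtom m) ∈ limAtoms n S₀ := by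
  obtain ⟨t, -, hτ⟩ := exists_schedule_eq (n := n) (.refl i x) 0
  exact ⟨t + 1, by simp [searchChain, hτ, Sequent.step]⟩

theorem limAtoms_eucl {i : Fin m} {x y z : ℕ} (hxy : ((i, x, y) : RAtom m) ∈ limAtoms n S₀)
    (hxz : ((i, x, z) : RAtom m) ∈ limAtoms n S₀) : ((i, y, z) : RAtom m) ∈ limAtoms n S₀ := by
  by_cases hyz : y = z
  · exact hyz ▸ limAtoms_refl i y
  obtain ⟨t₀, ht₀⟩ := hxy
  obtain ⟨t₁, ht₁⟩ := hxz
  obtain ⟨t, ht, hτ⟩ := exists_schedule_eq (n := n) (.eucl i x y z) (max t₀ t₁)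
  have hxy := searchChain_atoms_mono (le_of_max_le_left ht) ht₀
  have hxz := searchChain_atoms_mono (le_of_max_le_right ht) ht₁
  exact ⟨t + 1, by simp [searchChain, hτ, Sequent.step, hxy, hxz, hyz]⟩

theorem limAtoms_ioa (u : Fin m → ℕ) : ∃ v, ∀ i, ((i, u i, v) : RAtom m) ∈ limAtoms n S₀ := by
  obtain ⟨t, -, hτ⟩ := exists_schedule_eq (n := n) (.ioa u) 0
  exact ⟨(searchChain n S₀ t).fresh, fun i => ⟨t + 1, by
    simp [searchChain, hτ, Sequent.step, ioaAtoms]⟩⟩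

theorem limAtoms_apc (h₀ : ¬ Seq G3flags n m S₀.atoms S₀.fmls) (hn : 0 < n) (i : Fin m)
    (w : Fin (n + 1) → ℕ) : ∃ k j, k < j ∧ ((i, w k, w j) : RAtom m) ∈ limAtoms n S₀ := by
  obtain ⟨t, -, hτ⟩ := exists_schedule_eq (n := n) (.apc i w) 0
  have hex : ∃ p : Fin (n + 1) × Fin (n + 1), p.1 < p.2 ∧
      ¬ Seq G3flags n m (((i, w p.1, w p.2) : RAtom m) ::ₘ (searchChain n S₀ t).atoms)
        (searchChain n S₀ t).fmls := by
    by_contra! hall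
    exact not_seq_searchChain h₀ t (Seq.of_apc hn i w fun k j hkj => hall (k, j) hkj)
  exact ⟨_, _, hex.choose_spec.1, t + 1, by simp [searchChain, hτ, Sequent.step, hex]⟩

/-- Unlike the other formulas, an `[i]`-formula is erased when its task fires, so it persists
only until then; firing leaves the witness behind. -/
theorem limFmls_ag {x : ℕ} {i : Fin m} {φ : Fml m} (he : (x, .ag i φ) ∈ limFmls n S₀) :
    ∃ v, ((i, x, v) : RAtom m) ∈ limAtoms n S₀ ∧ (v, φ) ∈ limFmls n S₀ := by
  obtain ⟨t, he⟩ := he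
  have fire (s : ℕ) (hs : (x, .ag i φ) ∈ (searchChain n S₀ s).fmls)
      (hτ : schedule n m s = .ag x i φ) :
      ∃ v, ((i, x, v) : RAtom m) ∈ limAtoms n S₀ ∧ (v, φ) ∈ limFmls n S₀ :=
    ⟨(searchChain n S₀ s).fresh, ⟨s + 1, by simp [searchChain, hτ, Sequent.step, hs]⟩,
      ⟨s + 1, by simp [searchChain, hτ, Sequent.step, hs]⟩⟩
  have persist (s : ℕ) (hs : t ≤ s) : (x, .ag i φ) ∈ (searchChain n S₀ s).fmls ∨
      ∃ v, ((i, x, v) : RAtom m) ∈ limAtoms n S₀ ∧ (v, φ) ∈ limFmls n S₀ := by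
    induction s, hs using Nat.le_induction with
    | base => exact .inl he
    | succ s _ ih =>
      refine ih.elim (fun hs => ?_) .inr
      obtain h | ⟨i', φ', heq, hτ⟩ := Sequent.mem_fmls_step hs (schedule n m s)
      · exact .inl h
      · obtain ⟨rfl, rfl⟩ := Fml.ag.inj heq
        exact .inr (fire s hs hτ)
  obtain ⟨s, hs, hτ⟩ := exists_schedule_eq (n := n) (.ag x i φ) t
  exact (persist s hs).elim (fire s · hτ) id

noncomputable def limModel (h₀ : ¬ Seq G3flags n m S₀.atoms S₀.fmls) : ModelOn n m ℕ where
  nonemp := ⟨0⟩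
  rel i x y := ((i, x, y) : RAtom m) ∈ limAtoms n S₀
  refl := limAtoms_refl
  symm _ x _ hxy := limAtoms_eucl hxy (limAtoms_refl _ x)
  trans _ x _ _ hxy hyz := limAtoms_eucl (limAtoms_eucl hxy (limAtoms_refl _ x)) hyz
  ioa := limAtoms_ioa
  apc := limAtoms_apc h₀
  val p := {x | (x, .pos p) ∉ limFmls n S₀}

theorem not_sat_limModel (h₀ : ¬ Seq G3flags n m S₀.atoms S₀.fmls) (φ : Fml m) {x : ℕ}
    (he : (x, φ) ∈ limFmls n S₀) : ¬ Sat (limModel h₀) x φ := by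
  induction φ generalizing x with
  | pos p => exact fun hsat => hsat he
  | neg p =>
    intro hsat
    obtain ⟨t₀, ht₀⟩ := he
    obtain ⟨t₁, ht₁⟩ := not_not.1 hsat
    exact not_seq_searchChain h₀ (max t₀ t₁) (Seq.of_mem_id
      (searchChain_fmls_mono (le_max_right _ _) (by simp) ht₁)
      (searchChain_fmls_mono (le_max_left _ _) (by simp) ht₀))
  | and φ ψ ihφ ihψ =>
    exact fun ⟨hφ, hψ⟩ => (limFmls_and he).elim (ihφ · hφ) (ihψ · hψ)
  | or φ ψ ihφ ihψ =>
    exact fun hsat => hsat.elim (ihφ (limFmls_or he).1) (ihψ (limFmls_or he).2)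
  | box φ ih =>
    obtain ⟨v, hv⟩ := limFmls_box he
    exact fun hsat => ih hv (hsat v)
  | dia φ ih => exact fun ⟨u, hu⟩ => ih (limFmls_dia he u) hu
  | ag i φ ih =>
    obtain ⟨v, hxv, hv⟩ := limFmls_ag he
    exact fun hsat => ih hv (hsat v hxv)
  | dag i φ ih => exact fun ⟨u, hxu, hu⟩ => ih (limFmls_dag he hxu) hu

end Saturation

theorem seq_of_valid {φ : Fml m} (w : ℕ) (h : Valid n m φ) :
    Seq G3flags n m 0 {(w, φ)} := by
  by_contra h₀
  let S₀ : Sequent m := ⟨0, {(w, φ)}⟩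
  exact not_sat_limModel (S₀ := S₀) h₀ φ ⟨0, Multiset.mem_singleton_self _⟩ (h _ _ w)

end ProofSearch

section HilbertCalculus

namespace Hderiv

variable {n m : ℕ} {Γ Δ : Set (Fml m)} {φ ψ : Fml m}

theorem exists_list_premises (h : Hderiv n m Γ φ) : ∃ L : List (Fml m), (∀ ψ ∈ L, ψ ∈ Γ) ∧
    ∀ Δ : Set (Fml m), (∀ ψ ∈ L, Hderiv n m Δ ψ) → Hderiv n m Δ φ := by
  induction h with
  | @prem _ ψ h => exact ⟨[ψ], by simpa using h, fun _ hΔ => hΔ ψ (by simp)⟩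
  | ax1 φ ψ => exact ⟨[], by simp, fun _ _ => .ax1 φ ψ⟩
  | ax2 φ ψ χ => exact ⟨[], by simp, fun _ _ => .ax2 φ ψ χ⟩
  | ax3 φ ψ => exact ⟨[], by simp, fun _ _ => .ax3 φ ψ⟩
  | boxK φ ψ => exact ⟨[], by simp, fun _ _ => .boxK φ ψ⟩
  | boxT φ => exact ⟨[], by simp, fun _ _ => .boxT φ⟩
  | box5 φ => exact ⟨[], by simp, fun _ _ => .box5 φ⟩
  | boxDual φ => exact ⟨[], by simp, fun _ _ => .boxDual φ⟩
  | agK i φ ψ => exact ⟨[], by simp, fun _ _ => .agK i φ ψ⟩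
  | agT i φ => exact ⟨[], by simp, fun _ _ => .agT i φ⟩
  | ag5 i φ => exact ⟨[], by simp, fun _ _ => .ag5 i φ⟩
  | agDual i φ => exact ⟨[], by simp, fun _ _ => .agDual i φ⟩
  | bridge i φ => exact ⟨[], by simp, fun _ _ => .bridge i φ⟩
  | ioa f => exact ⟨[], by simp, fun _ _ => .ioa f⟩
  | apc hn i f => exact ⟨[], by simp, fun _ _ => .apc hn i f⟩
  | nec h => exact ⟨[], by simp, fun _ _ => .nec h⟩
  | mp _ _ ih₁ ih₂ =>
    obtain ⟨L₁, hL₁, h₁⟩ := ih₁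
    obtain ⟨L₂, hL₂, h₂⟩ := ih₂
    refine ⟨L₁ ++ L₂, by simpa [or_imp, forall_and] using ⟨hL₁, hL₂⟩, fun Δ hΔ => ?_⟩
    simp only [List.mem_append, or_imp, forall_and] at hΔ
    exact .mp (h₁ Δ hΔ.1) (h₂ Δ hΔ.2)

theorem mono (h : Hderiv n m Γ φ) (hΓ : Γ ⊆ Δ) : Hderiv n m Δ φ :=
  let ⟨_, hL, h⟩ := h.exists_list_premises
  h Δ fun ψ hψ => .prem (hΓ (hL ψ hψ))

theorem imp_self (φ : Fml m) : Hderiv n m Γ (φ.impF φ) :=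
  .mp (.mp (.ax2 φ (φ.impF φ) φ) (.ax1 φ (φ.impF φ))) (.ax1 φ φ)

theorem deduction (h : Hderiv n m (insert φ Γ) ψ) : Hderiv n m Γ (φ.impF ψ) := by
  generalize hΓ' : insert φ Γ = Γ' at h
  induction h with
  | @prem _ ψ h =>
    subst hΓ'
    rcases h with rfl | h
    exacts [imp_self ψ, .mp (.ax1 ψ φ) (.prem h)]
  | ax1 α β => exact .mp (.ax1 _ φ) (.ax1 α β)
  | ax2 α β γ => exact .mp (.ax1 _ φ) (.ax2 α β γ)
  | ax3 α β => exact .mp (.ax1 _ φ) (.ax3 α β)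
  | boxK α β => exact .mp (.ax1 _ φ) (.boxK α β)
  | boxT α => exact .mp (.ax1 _ φ) (.boxT α)
  | box5 α => exact .mp (.ax1 _ φ) (.box5 α)
  | boxDual α => exact .mp (.ax1 _ φ) (.boxDual α)
  | agK i α β => exact .mp (.ax1 _ φ) (.agK i α β)
  | agT i α => exact .mp (.ax1 _ φ) (.agT i α)
  | ag5 i α => exact .mp (.ax1 _ φ) (.ag5 i α)
  | agDual i α => exact .mp (.ax1 _ φ) (.agDual i α)
  | bridge i α => exact .mp (.ax1 _ φ) (.bridge i α)
  | ioa f => exact .mp (.ax1 _ φ) (.ioa f)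
  | apc hn i f => exact .mp (.ax1 _ φ) (.apc hn i f)
  | nec h => exact .mp (.ax1 _ φ) (.nec h)
  | mp _ _ ih₁ ih₂ => exact .mp (.mp (.ax2 _ _ _) (ih₁ hΓ')) (ih₂ hΓ')

theorem weaken (h : Hderiv n m Γ ψ) : Hderiv n m (insert φ Γ) ψ :=
  h.mono (Set.subset_insert _ _)

theorem assumption : Hderiv n m (insert φ Γ) φ := .prem (Set.mem_insert _ _)

theorem contrapose (h : Hderiv n m Γ (φ.impF ψ)) : Hderiv n m Γ (ψ.negF.impF φ.negF) := by
  have hax := Hderiv.ax3 (n := n) (Γ := Γ) ψ.negF φ.negF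
  rw [Fml.negF_negF, Fml.negF_negF] at hax
  exact .mp hax h

theorem absurd (h₁ : Hderiv n m Γ φ.negF) (h₂ : Hderiv n m Γ φ) : Hderiv n m Γ ψ :=
  .mp (.mp (.ax3 φ ψ) (.mp (.ax1 φ.negF ψ.negF) h₁)) h₂

theorem by_contra (h : Hderiv n m (insert φ.negF Γ) φ) : Hderiv n m Γ φ := by
  have h₁ : Hderiv n m (insert (φ.negF.impF φ) Γ) (φ.negF.impF (φ.negF.impF φ).negF) :=
    deduction (absurd assumption (.mp assumption.weaken assumption))
  exact .mp (deduction (.mp (.mp (.ax3 _ φ) h₁) assumption)) (deduction h)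

theorem and_left (h : Hderiv n m Γ (.and φ ψ)) : Hderiv n m Γ φ :=
  .mp (.mp (.ax3 (.and φ ψ) φ) (deduction (deduction (absurd assumption.weaken assumption)))) h

theorem and_right (h : Hderiv n m Γ (.and φ ψ)) : Hderiv n m Γ ψ :=
  .mp (.mp (.ax3 (.and φ ψ) ψ) (.ax1 ψ.negF φ)) h

theorem and_intro (h₁ : Hderiv n m Γ φ) (h₂ : Hderiv n m Γ ψ) : Hderiv n m Γ (.and φ ψ) := by
  have h : Hderiv n m (insert (φ.impF ψ.negF) Γ) (φ.impF ψ.negF).negF :=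
    absurd (.mp assumption h₁.weaken) h₂.weaken
  simpa [Fml.impF, Fml.negF] using by_contra (φ := (φ.impF ψ.negF).negF) (by rwa [Fml.negF_negF])

theorem and_iff : Hderiv n m Γ (.and φ ψ) ↔ Hderiv n m Γ φ ∧ Hderiv n m Γ ψ :=
  ⟨fun h => ⟨h.and_left, h.and_right⟩, fun h => and_intro h.1 h.2⟩

end Hderiv

variable {n m : ℕ}

def Fml.bot {m : ℕ} : Fml m := .and (.pos 0) (.neg 0)

def listConj {m : ℕ} : List (Fml m) → Fml m
  | [] => Fml.bot.negF
  | φ :: L => .and φ (listConj L)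

theorem listConj_iff {P : Fml m → Prop} (hP : ∀ φ ψ, P (.and φ ψ) ↔ P φ ∧ P ψ)
    (htop : P Fml.bot.negF) (L : List (Fml m)) : P (listConj L) ↔ ∀ φ ∈ L, P φ := by
  induction L with
  | nil => simpa [listConj] using htop
  | cons φ L ih => simp [listConj, hP, ih]

namespace Hderiv

variable {Γ : Set (Fml m)} {φ : Fml m}

theorem top : Hderiv n m Γ Fml.bot.negF := imp_self (.pos 0)

theorem listConj_iff {L : List (Fml m)} :
    Hderiv n m Γ (listConj L) ↔ ∀ φ ∈ L, Hderiv n m Γ φ :=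
  Stit.listConj_iff (fun _ _ => and_iff) top L

theorem negF_of_insert (h : Hderiv n m (insert φ Γ) Fml.bot) : Hderiv n m Γ φ.negF :=
  .mp (contrapose (deduction h)) top

theorem exists_listConj_imp (h : Hderiv n m Γ φ) :
    ∃ L : List (Fml m), (∀ ψ ∈ L, ψ ∈ Γ) ∧ Hderiv n m ∅ ((listConj L).impF φ) := by
  obtain ⟨L, hL, hφ⟩ := h.exists_list_premises
  exact ⟨L, hL, deduction (hφ _ (listConj_iff.1 assumption))⟩

end Hderiv

def Consistent (n m : ℕ) (Γ : Set (Fml m)) : Prop := ¬ Hderiv n m Γ Fml.bot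

def MaxConsistent (n m : ℕ) (Γ : Set (Fml m)) : Prop :=
  Consistent n m Γ ∧ ∀ φ, φ ∈ Γ ∨ φ.negF ∈ Γ

namespace MaxConsistent

variable {Γ : Set (Fml m)} {φ ψ : Fml m}

theorem mem_iff_hderiv (hΓ : MaxConsistent n m Γ) : φ ∈ Γ ↔ Hderiv n m Γ φ :=
  ⟨.prem, fun h => (hΓ.2 φ).resolve_right fun hneg => hΓ.1 (.absurd (.prem hneg) h)⟩

theorem negF_mem_iff (hΓ : MaxConsistent n m Γ) : φ.negF ∈ Γ ↔ φ ∉ Γ :=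
  ⟨fun hneg h => hΓ.1 (.absurd (.prem hneg) (.prem h)), (hΓ.2 φ).resolve_left⟩

theorem mem_of_imp_mem (hΓ : MaxConsistent n m Γ) (himp : φ.impF ψ ∈ Γ) (h : φ ∈ Γ) : ψ ∈ Γ :=
  (hΓ.mem_iff_hderiv).2 (.mp (.prem himp) (.prem h))

theorem and_mem_iff (hΓ : MaxConsistent n m Γ) : Fml.and φ ψ ∈ Γ ↔ φ ∈ Γ ∧ ψ ∈ Γ := by
  simp only [hΓ.mem_iff_hderiv, Hderiv.and_iff]

theorem or_mem_iff (hΓ : MaxConsistent n m Γ) : Fml.or φ ψ ∈ Γ ↔ φ ∈ Γ ∨ ψ ∈ Γ := by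
  have hand := hΓ.and_mem_iff (φ := φ.negF) (ψ := ψ.negF)
  have hor := hΓ.negF_mem_iff (φ := Fml.or φ ψ)
  simp only [Fml.negF, hΓ.negF_mem_iff] at hand hor
  tauto

theorem listConj_mem_iff (hΓ : MaxConsistent n m Γ) (L : List (Fml m)) :
    listConj L ∈ Γ ↔ ∀ φ ∈ L, φ ∈ Γ :=
  listConj_iff (fun _ _ => hΓ.and_mem_iff) (hΓ.mem_iff_hderiv.2 .top) L

theorem conjUpTo_mem_iff (hΓ : MaxConsistent n m Γ) (f : ℕ → Fml m) (k : ℕ) :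
    conjUpTo f k ∈ Γ ↔ ∀ j ≤ k, f j ∈ Γ :=
  conjUpTo_iff (fun _ _ => hΓ.and_mem_iff) f k

theorem disjUpTo_mem_iff (hΓ : MaxConsistent n m Γ) (f : ℕ → Fml m) (k : ℕ) :
    disjUpTo f k ∈ Γ ↔ ∃ j ≤ k, f j ∈ Γ :=
  disjUpTo_iff (fun _ _ => hΓ.or_mem_iff) f k

theorem prefNegConj_mem_iff (hΓ : MaxConsistent n m Γ) (f : ℕ → Fml m) (j : ℕ) (base : Fml m) :
    prefNegConj f j base ∈ Γ ↔ (∀ l < j, f l ∉ Γ) ∧ base ∈ Γ :=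
  prefNegConj_iff (fun _ _ => hΓ.and_mem_iff) (fun _ => hΓ.negF_mem_iff) f j base

end MaxConsistent

theorem exists_maxConsistent_superset {Γ : Set (Fml m)} (h : Consistent n m Γ) :
    ∃ Δ, Γ ⊆ Δ ∧ MaxConsistent n m Δ := by
  obtain ⟨Δ, hΓΔ, hmax⟩ := zorn_subset_nonempty {Δ | Consistent n m Δ} (fun c hc hchain hne => by
    refine ⟨⋃₀ c, fun hbot => ?_, fun _ => Set.subset_sUnion_of_mem⟩
    obtain ⟨L, hL, hbot⟩ := hbot.exists_list_premises
    obtain ⟨Δ, hΔc, hLΔ⟩ := hchain.directedOn.exists_mem_subset_of_finite_of_subset_sUnion hne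
      L.finite_toSet hL
    exact hc hΔc (hbot Δ fun ψ hψ => .prem (hLΔ hψ))) Γ h
  refine ⟨Δ, hΓΔ, hmax.1, fun φ => ?_⟩
  by_contra! hnot
  have hins (ψ : Fml m) (hψ : ψ ∉ Δ) : Hderiv n m (insert ψ Δ) Fml.bot :=
    not_not.1 fun hcon => hψ (hmax.2 hcon (Set.subset_insert _ _) (Set.mem_insert _ _))
  exact hmax.1 (.mp (.deduction (hins φ hnot.1))
    (by simpa using Hderiv.negF_of_insert (hins _ hnot.2)))

end HilbertCalculus

section CanonicalModel

variable {n m : ℕ}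

structure IsS5 (n m : ℕ) (O P : Fml m → Fml m) : Prop where
  negF_nec : ∀ φ, (O φ).negF = P φ.negF
  K : ∀ Γ φ ψ, Hderiv n m Γ ((O (φ.impF ψ)).impF ((O φ).impF (O ψ)))
  T : ∀ Γ φ, Hderiv n m Γ ((O φ).impF φ)
  five : ∀ Γ φ, Hderiv n m Γ ((P φ).impF (O (P φ)))
  nec : ∀ Γ φ, Hderiv n m ∅ φ → Hderiv n m Γ (O φ)

theorem isS5_box : IsS5 n m .box .dia :=
  ⟨fun _ => rfl, fun _ => .boxK, fun _ => .boxT, fun _ => .box5, fun _ _ => .nec⟩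

theorem isS5_ag (i : Fin m) : IsS5 n m (.ag i) (.dag i) :=
  ⟨fun _ => rfl, fun _ => .agK i, fun _ => .agT i, fun _ => .ag5 i,
    fun _ φ h => .mp (.bridge i φ) (.nec h)⟩

namespace IsS5

variable {O P : Fml m → Fml m} {Γ : Set (Fml m)}

theorem negF_poss (hO : IsS5 n m O P) (φ : Fml m) : (P φ).negF = O φ.negF := by
  simpa using congrArg Fml.negF (hO.negF_nec φ.negF).symm

theorem mono (hO : IsS5 n m O P) {φ ψ : Fml m} (h : Hderiv n m ∅ (φ.impF ψ)) :
    Hderiv n m Γ ((O φ).impF (O ψ)) :=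
  .mp (hO.K Γ φ ψ) (hO.nec Γ _ h)

theorem hderiv_listConj (hO : IsS5 n m O P) {L : List (Fml m)} (h : ∀ φ ∈ L, Hderiv n m Γ (O φ)) :
    Hderiv n m Γ (O (listConj L)) := by
  induction L with
  | nil => exact hO.nec Γ _ .top
  | cons φ L ih =>
    simp only [List.mem_cons, forall_eq_or_imp] at h
    have hpair : Hderiv n m ∅ (φ.impF ((listConj L).impF (.and φ (listConj L)))) :=
      .deduction (.deduction (.and_intro Hderiv.assumption.weaken .assumption))
    exact .mp (.mp (hO.K Γ _ _) (.mp (hO.mono hpair) h.1)) (ih h.2)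

end IsS5

def CanonRel (O : Fml m → Fml m) (Δ Θ : Set (Fml m)) : Prop := ∀ χ, O χ ∈ Δ → χ ∈ Θ

namespace CanonRel

variable {O P : Fml m → Fml m} {Δ Θ Ξ : Set (Fml m)}

theorem refl (hO : IsS5 n m O P) (hΔ : MaxConsistent n m Δ) : CanonRel O Δ Δ :=
  fun χ h => hΔ.mem_of_imp_mem (hΔ.mem_iff_hderiv.2 (hO.T _ χ)) h

theorem dual_mem (hO : IsS5 n m O P) (hΔ : MaxConsistent n m Δ) (hΘ : MaxConsistent n m Θ)
    (hΔΘ : CanonRel O Δ Θ) {χ : Fml m} (hχ : χ ∈ Θ) : P χ ∈ Δ := by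
  by_contra hP
  rw [← hΔ.negF_mem_iff, hO.negF_poss] at hP
  exact hΘ.negF_mem_iff.1 (hΔΘ _ hP) hχ

theorem eucl (hO : IsS5 n m O P) (hΔ : MaxConsistent n m Δ) (hΘ : MaxConsistent n m Θ)
    (hΔΘ : CanonRel O Δ Θ) (hΔΞ : CanonRel O Δ Ξ) : CanonRel O Θ Ξ := by
  intro χ hχ
  refine hΔΞ χ (not_not.1 fun hO' => ?_)
  rw [← hΔ.negF_mem_iff, hO.negF_nec] at hO'
  have h5 : O (P χ.negF) ∈ Δ := hΔ.mem_of_imp_mem (hΔ.mem_iff_hderiv.2 (hO.five _ _)) hO'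
  exact (hΘ.negF_mem_iff.1 (hO.negF_nec χ ▸ hΔΘ _ h5)) hχ

theorem symm (hO : IsS5 n m O P) (hΔ : MaxConsistent n m Δ) (hΘ : MaxConsistent n m Θ)
    (hΔΘ : CanonRel O Δ Θ) : CanonRel O Θ Δ :=
  eucl hO hΔ hΘ hΔΘ (refl hO hΔ)

theorem trans (hO : IsS5 n m O P) (hΔ : MaxConsistent n m Δ) (hΘ : MaxConsistent n m Θ)
    (hΔΘ : CanonRel O Δ Θ) (hΘΞ : CanonRel O Θ Ξ) : CanonRel O Δ Ξ :=
  eucl hO hΘ hΔ (symm hO hΔ hΘ hΔΘ) hΘΞ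

theorem exists_of_dual_mem (hO : IsS5 n m O P) (hΔ : MaxConsistent n m Δ) {ψ : Fml m}
    (hψ : P ψ ∈ Δ) : ∃ Θ, MaxConsistent n m Θ ∧ CanonRel O Δ Θ ∧ ψ ∈ Θ := by
  have hcon : Consistent n m (insert ψ {χ | O χ ∈ Δ}) := fun hbot => by
    obtain ⟨L, hL, himp⟩ := (Hderiv.negF_of_insert hbot).exists_listConj_imp
    have hconj : O (listConj L) ∈ Δ :=
      hΔ.mem_iff_hderiv.2 (hO.hderiv_listConj fun φ hφ => .prem (hL φ hφ))
    have hneg : O ψ.negF ∈ Δ := hΔ.mem_of_imp_mem (hΔ.mem_iff_hderiv.2 (hO.mono himp)) hconj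
    exact hΔ.negF_mem_iff.1 (hO.negF_poss ψ ▸ hneg) hψ
  obtain ⟨Θ, hsub, hΘ⟩ := exists_maxConsistent_superset hcon
  exact ⟨Θ, hΘ, fun χ hχ => hsub (Set.mem_insert_of_mem _ hχ), hsub (Set.mem_insert _ _)⟩

end CanonRel

def cluster (n m : ℕ) (Δ₀ : Set (Fml m)) : Set (Set (Fml m)) :=
  {Θ | MaxConsistent n m Θ ∧ CanonRel .box Δ₀ Θ}

section Cluster

variable {Δ₀ Δ Θ : Set (Fml m)}

theorem self_mem_cluster (hΔ₀ : MaxConsistent n m Δ₀) : Δ₀ ∈ cluster n m Δ₀ :=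
  ⟨hΔ₀, .refl isS5_box hΔ₀⟩

theorem canonRel_box_of_mem_cluster (hΔ₀ : MaxConsistent n m Δ₀) (hΔ : Δ ∈ cluster n m Δ₀)
    (hΘ : Θ ∈ cluster n m Δ₀) : CanonRel .box Δ Θ :=
  .eucl isS5_box hΔ₀ hΔ.1 hΔ.2 hΘ.2

theorem mem_cluster_of_canonRel_ag (hΔ₀ : MaxConsistent n m Δ₀) (hΔ : Δ ∈ cluster n m Δ₀)
    (hΘ : MaxConsistent n m Θ) {i : Fin m} (hΔΘ : CanonRel (.ag i) Δ Θ) : Θ ∈ cluster n m Δ₀ :=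
  ⟨hΘ, .trans isS5_box hΔ₀ hΔ.1 hΔ.2 fun χ hχ =>
    hΔΘ χ (hΔ.1.mem_of_imp_mem (hΔ.1.mem_iff_hderiv.2 (.bridge i χ)) hχ)⟩

theorem dia_mem_of_mem_cluster (hΔ₀ : MaxConsistent n m Δ₀) (hΔ : Δ ∈ cluster n m Δ₀)
    (hΘ : Θ ∈ cluster n m Δ₀) {χ : Fml m} (hχ : χ ∈ Θ) : Fml.dia χ ∈ Δ :=
  CanonRel.dual_mem isS5_box hΔ.1 hΘ.1 (canonRel_box_of_mem_cluster hΔ₀ hΔ hΘ) hχ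

end Cluster

variable {Δ₀ : Set (Fml m)}

/-- Suppose a finite part `L` derives `⊥`. Assign to each `ψ ∈ L` an agent `g ψ` with
`[g ψ] ψ ∈ u (g ψ)` and let `f i` be the conjunction of the `ψ` assigned to `i`: then (IOA) makes
`⋀ᵢ [i] f i` possible, although it entails all of `L`. -/
theorem consistent_setOf_exists_ag_mem (hm : 0 < m) (hΔ₀ : MaxConsistent n m Δ₀)
    {u : Fin m → Set (Fml m)} (hu : ∀ i, u i ∈ cluster n m Δ₀) : Consistent n m {χ | ∃ i, .ag i χ ∈ u i} := by
  intro hbot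
  obtain ⟨L, hL, hbot⟩ := hbot.exists_list_premises
  have hagent (ψ : Fml m) : ∃ i : Fin m, ψ ∈ L → .ag i ψ ∈ u i := by
    by_cases hψ : ψ ∈ L
    · exact (hL ψ hψ).imp fun _ h _ => h
    · exact ⟨⟨0, hm⟩, fun h => absurd h hψ⟩
  choose g hg using hagent
  let f (i : Fin m) : Fml m := listConj (L.filter (g · = i))
  have hf (i : Fin m) : Fml.ag i (f i) ∈ u i := by
    refine (hu i).1.mem_iff_hderiv.2 ((isS5_ag i).hderiv_listConj fun ψ hψ => .prem ?_)
    obtain ⟨hψL, hgψ⟩ := List.mem_filter.1 hψ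
    exact of_decide_eq_true hgψ ▸ hg ψ hψL
  let β := conjUpTo (agIdx f) (m - 1)
  have hβ : Hderiv n m {β} Fml.bot := hbot _ fun ψ hψ => by
    have hβ_ag : Hderiv n m {β} (agIdx f (g ψ)) :=
      (conjUpTo_iff (P := Hderiv n m {β}) (fun _ _ => Hderiv.and_iff) _ _).1
        (.prem (Set.mem_singleton β)) _ (Nat.le_sub_one_of_lt (g ψ).isLt)
    simp only [agIdx, (g ψ).isLt, dif_pos, Fin.eta] at hβ_ag
    exact Hderiv.listConj_iff.1 (.mp (.agT _ _) hβ_ag) ψ (by simpa [f] using hψ)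
  have hdia : Fml.dia β ∈ Δ₀ := by
    refine hΔ₀.mem_of_imp_mem (hΔ₀.mem_iff_hderiv.2 (.ioa f)) ((hΔ₀.conjUpTo_mem_iff _ _).2 ?_)
    intro j hj
    have hjm : j < m := by omega
    simpa [diaAgIdx, hjm] using
      dia_mem_of_mem_cluster hΔ₀ (self_mem_cluster hΔ₀) (hu ⟨j, hjm⟩) (hf ⟨j, hjm⟩)
  have hbox : Fml.box β.negF ∈ Δ₀ :=
    hΔ₀.mem_iff_hderiv.2 (.nec (Hderiv.negF_of_insert (by simpa using hβ)))
  exact (hΔ₀.negF_mem_iff (φ := .dia β)).1 hbox hdia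

theorem exists_forall_canonRel_ag (hm : 0 < m) (hΔ₀ : MaxConsistent n m Δ₀)
    (u : Fin m → Set (Fml m)) (hu : ∀ i, u i ∈ cluster n m Δ₀) :
    ∃ v ∈ cluster n m Δ₀, ∀ i, CanonRel (.ag i) (u i) v := by
  obtain ⟨v, hsub, hv⟩ := exists_maxConsistent_superset (consistent_setOf_exists_ag_mem hm hΔ₀ hu)
  have hrel (i : Fin m) : CanonRel (.ag i) (u i) v := fun χ hχ => hsub ⟨i, hχ⟩
  exact ⟨v, mem_cluster_of_canonRel_ag hΔ₀ (hu ⟨0, hm⟩) hv (hrel _), hrel⟩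

/-- The instance of (APC) for `φ_k := φ k`, read in the last world `Δs n`: each conjunct of its
antecedent is witnessed by `Δs j`, while each disjunct of its consequent is refuted there. -/
theorem not_apc_separated (hn : 0 < n) (hΔ₀ : MaxConsistent n m Δ₀) (i : Fin m)
    {Δs : Fin (n + 1) → Set (Fml m)} (hΔs : ∀ k, Δs k ∈ cluster n m Δ₀)
    (φ : Fin (n + 1) → Fml m) (hag : ∀ k, Fml.ag i (φ k) ∈ Δs k)
    (hneg : ∀ k j, k < j → φ k ∉ Δs j) : False := by
  let f (k : ℕ) : Fml m := if hk : k < n + 1 then φ ⟨k, hk⟩ else .bot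
  have hf {k : ℕ} (hk : k < n + 1) : f k = φ ⟨k, hk⟩ := dif_pos hk
  have hlast := (hΔs (Fin.last n)).1
  have hante : apcAnte i f (n - 1) ∈ Δs (Fin.last n) := by
    refine (hlast.conjUpTo_mem_iff _ _).2 fun j hj => ?_
    have hjn : j < n + 1 := by omega
    refine dia_mem_of_mem_cluster hΔ₀ (hΔs _) (hΔs ⟨j, hjn⟩) ?_
    refine ((hΔs _).1.prefNegConj_mem_iff _ _ _).2 ⟨fun l hl => ?_, ?_⟩
    · rw [hf (by omega)]
      exact hneg ⟨l, by omega⟩ ⟨j, hjn⟩ hl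
    · rw [hf hjn]
      exact hag ⟨j, hjn⟩
  have hconseq := hlast.mem_of_imp_mem (hlast.mem_iff_hderiv.2 (.apc hn i f)) hante
  obtain ⟨k, hk, hfk⟩ := (hlast.disjUpTo_mem_iff _ _).1 hconseq
  have hkn : k < n + 1 := by omega
  exact hneg ⟨k, hkn⟩ (Fin.last n) (Fin.mk_lt_of_lt_val (by simp; omega)) (hf hkn ▸ hfk)

theorem exists_lt_canonRel_ag (hn : 0 < n) (hΔ₀ : MaxConsistent n m Δ₀) (i : Fin m)
    (Δs : Fin (n + 1) → Set (Fml m)) (hΔs : ∀ k, Δs k ∈ cluster n m Δ₀) :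
    ∃ k j, k < j ∧ CanonRel (.ag i) (Δs k) (Δs j) := by
  by_contra! hunrel
  have hsep (k j : Fin (n + 1)) : ∃ χ, k < j → Fml.ag i χ ∈ Δs k ∧ χ ∉ Δs j := by
    by_cases hkj : k < j
    · obtain ⟨χ, hχ⟩ := not_forall.1 (hunrel k j hkj)
      exact ⟨χ, fun _ => Classical.not_imp.1 hχ⟩
    · exact ⟨.bot, fun h => absurd h hkj⟩
  choose χ hχ using hsep
  refine not_apc_separated hn hΔ₀ i hΔs
    (fun k => listConj (((List.finRange (n + 1)).filter (k < ·)).map (χ k))) (fun k => ?_)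
    (fun k j hkj hconj => ?_)
  · refine (hΔs k).1.mem_iff_hderiv.2 ((isS5_ag i).hderiv_listConj fun ψ hψ => .prem ?_)
    obtain ⟨j, hj, rfl⟩ := List.mem_map.1 hψ
    exact (hχ k j (by simpa using hj)).1
  · exact (hχ k j hkj).2 (((hΔs j).1.listConj_mem_iff _).1 hconj _
      (List.mem_map_of_mem (List.mem_filter.2 ⟨List.mem_finRange j, by simpa using hkj⟩)))

noncomputable def canonModel (hm : 0 < m) (hΔ₀ : MaxConsistent n m Δ₀) :
    ModelOn n m (cluster n m Δ₀) where
  nonemp := ⟨⟨Δ₀, self_mem_cluster hΔ₀⟩⟩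
  rel i Δ Θ := CanonRel (.ag i) Δ.1 Θ.1
  refl i Δ := .refl (isS5_ag i) Δ.2.1
  symm i Δ Θ := .symm (isS5_ag i) Δ.2.1 Θ.2.1
  trans i Δ Θ _ := .trans (isS5_ag i) Δ.2.1 Θ.2.1
  ioa u :=
    let ⟨v, hv, hrel⟩ := exists_forall_canonRel_ag hm hΔ₀ (fun i => (u i).1) fun i => (u i).2
    ⟨⟨v, hv⟩, hrel⟩
  apc hn i w := exists_lt_canonRel_ag hn hΔ₀ i (fun k => (w k).1) fun k => (w k).2
  val p := {Δ | .pos p ∈ Δ.1}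

theorem sat_canonModel (hm : 0 < m) (hΔ₀ : MaxConsistent n m Δ₀) (φ : Fml m)
    (Δ : cluster n m Δ₀) (hφ : φ ∈ Δ.1) : Sat (canonModel hm hΔ₀) Δ φ := by
  obtain ⟨Δ, hΔ⟩ := Δ
  induction φ generalizing Δ with
  | pos p => exact hφ
  | neg p => exact hΔ.1.negF_mem_iff.1 hφ
  | and φ ψ ihφ ihψ =>
    obtain ⟨h₁, h₂⟩ := hΔ.1.and_mem_iff.1 hφ
    exact ⟨ihφ Δ hΔ h₁, ihψ Δ hΔ h₂⟩
  | or φ ψ ihφ ihψ => exact (hΔ.1.or_mem_iff.1 hφ).imp (ihφ Δ hΔ) (ihψ Δ hΔ)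
  | box φ ih =>
    exact fun Θ => ih Θ.1 Θ.2 (canonRel_box_of_mem_cluster hΔ₀ hΔ Θ.2 φ hφ)
  | dia φ ih =>
    obtain ⟨Θ, hΘ, hΔΘ, hφΘ⟩ := CanonRel.exists_of_dual_mem isS5_box hΔ.1 hφ
    have hΘ' : Θ ∈ cluster n m Δ₀ := ⟨hΘ, .trans isS5_box hΔ₀ hΔ.1 hΔ.2 hΔΘ⟩
    exact ⟨⟨Θ, hΘ'⟩, ih Θ hΘ' hφΘ⟩
  | ag i φ ih => exact fun Θ hΔΘ => ih Θ.1 Θ.2 (hΔΘ φ hφ)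
  | dag i φ ih =>
    obtain ⟨Θ, hΘ, hΔΘ, hφΘ⟩ := CanonRel.exists_of_dual_mem (isS5_ag i) hΔ.1 hφ
    have hΘ' := mem_cluster_of_canonRel_ag hΔ₀ hΔ hΘ hΔΘ
    exact ⟨⟨Θ, hΘ'⟩, hΔΘ, ih Θ hΘ' hφΘ⟩

theorem hderiv_of_valid (hm : 0 < m) {φ : Fml m} (h : Valid n m φ) : Hderiv n m ∅ φ := by
  by_contra hφ
  have hcon : Consistent n m {φ.negF} := fun hbot => by
    have := Hderiv.negF_of_insert (Γ := ∅) (φ := φ.negF) (hbot.mono (by simp))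
    exact hφ (Fml.negF_negF φ ▸ this)
  obtain ⟨Δ₀, hsub, hΔ₀⟩ := exists_maxConsistent_superset hcon
  have hsat := sat_canonModel hm hΔ₀ φ.negF ⟨Δ₀, self_mem_cluster hΔ₀⟩ (hsub rfl)
  exact (sat_negF _ _ _).1 hsat (h _ _ _)

end CanonicalModel

/-- `G3Ldm_n^m` is sound and complete relative to the Hilbert calculus
`Ldm_n^m`: the sequent `w:φ` is derivable in `G3Ldm_n^m` iff `⊢_{Ldm_n^m} φ`. -/
theorem g3_equiv_hilbert (n m : ℕ) (hm : 1 ≤ m) (φ : Fml m) (w : ℕ) :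
    Seq G3flags n m 0 {(w, φ)} ↔ Hderiv n m ∅ φ :=
  ⟨fun h => hderiv_of_valid hm (valid_of_seq h), fun h => seq_of_valid w (valid_of_hderiv hm h)⟩

end Stit
end
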